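/- arXiv:1606.02506 — 4 statements merged into one kernel-verified Lean document; each statement's English description precedes it below -/
import Mathlib

section
/- Assume S_L = L is finite and endow Γ ≀ L with the switch-walk-switch generating set L S_Γ L. Let g = (γ,f) ∈ Γ ≀ L not be of the form (e_Γ, δ_s) for some s ∈ L, and let A = {y ∈ Γ : f(y) ≠ e_L} be the set of lamps which are on. Then the word length of g equals the travelling salesman distance in Cay(Γ,S_Γ): |g| = d_TS(e_Γ, A, γ). -/
/-! ### Cayley graphs, word metric, spheres, annuli -/

/-- The Cayley graph of a group with respect to a set `S` of generators
(symmetrized, without loops). -/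
def cayley (G : Type*) [Group G] (S : Set G) : SimpleGraph G where
  Adj g h := g ≠ h ∧ (g⁻¹ * h ∈ S ∨ h⁻¹ * g ∈ S)
  symm := by
    constructor
    rintro g h ⟨hne, hs⟩
    exact ⟨hne.symm, hs.symm⟩
  loopless := by
    constructor
    rintro g ⟨hne, -⟩
    exact hne rfl

variable {G : Type*} [Group G]

/-- The word length of `g`, i.e. the distance from the identity to `g` in the Cayley graph. -/
noncomputable def wlen (S : Set G) (g : G) : ℕ :=
  (cayley G S).dist 1 g

/-- The ball of radius `n`. -/
def wBall (S : Set G) (n : ℕ) : Set G := {g | wlen S g ≤ n}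

/-- The sphere of radius `n`. -/
def wSphere (S : Set G) (n : ℕ) : Set G := {g | wlen S g = n}

/-- The annulus of radius `n` and thickness `r`, i.e. `B(n+r) \ B(n-1)`. -/
def wAnnulus (S : Set G) (n r : ℕ) : Set G := {g | n ≤ wlen S g ∧ wlen S g ≤ n + r}

/-- The part of `A` lying in infinite connected components of the subgraph of the
Cayley graph induced on `A`.  When the infinite component is unique (one-ended case)
this is exactly the infinite component of `A`. -/
def infPart (S : Set G) (A : Set G) : Set G :=
  {g | ∃ hg : g ∈ A, {w : ↥A | ((cayley G S).induce A).Reachable ⟨g, hg⟩ w}.Infinite}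

/-- `S(n,r)^∞ = B(n+r) ∩ B(n-1)^{c,∞}`: the elements of the annulus connected to infinity. -/
def sphereInf (S : Set G) (n r : ℕ) : Set G :=
  wAnnulus S n r ∩ infPart S {g | n ≤ wlen S g}

/-- The graph `S(n,r)^∞` is connected. -/
def SpheresConn (S : Set G) (n r : ℕ) : Prop :=
  ((cayley G S).induce (sphereInf S n r)).Connected

/-- The connection thickness `th_{G,S}(n)`: the least `r` such that `S(n,r)^∞` is connected. -/
noncomputable def connThickness (S : Set G) (n : ℕ) : ℕ :=
  sInf {r | SpheresConn S n r}

/-- The retreat depth of `g`: the least `d ≥ 0` such that `g` belongs to an infinite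
component of the complement of `B(|g|-d-1)`. -/
noncomputable def retreatDepth (S : Set G) (g : G) : ℕ :=
  sInf {d | g ∈ infPart S {x | wlen S g ≤ wlen S x + d}}

/-- `rd(G,S) = sup_g rd(g)`, as an extended natural number. -/
noncomputable def rdSup (S : Set G) : ℕ∞ :=
  ⨆ g : G, (retreatDepth S g : ℕ∞)

/-- `g` is a dead-end: no neighbour of `g` is further away from the identity. -/
def IsDeadEnd (S : Set G) (g : G) : Prop :=
  ∀ h : G, (cayley G S).Adj g h → wlen S h ≤ wlen S g

/-- `x` and `y` are connected by a path staying inside `A`. -/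
def connectedIn (S : Set G) (A : Set G) (x y : G) : Prop :=
  ∃ w : (cayley G S).Walk x y, ∀ v ∈ w.support, v ∈ A

/-- The travelling salesman distance from `x` to `y` through `A`: the length of the
shortest walk from `x` to `y` visiting every vertex of `A`. -/
noncomputable def tsDist {V : Type*} (H : SimpleGraph V) (x : V) (A : Set V) (y : V) : ℕ :=
  sInf {n | ∃ w : H.Walk x y, w.length = n ∧ ∀ a ∈ A, a ∈ w.support}

/-! ### Entropy of partitions -/

/-- Shannon entropy of the partition of the finite set `A` into blocks `P x` (the block
of `x ∈ A`), with respect to the uniform measure: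
`H(Π) = -∑_{π ∈ Π} μ(π) log μ(π) = -(1/|A|) ∑_{x ∈ A} log (|P x|/|A|)`. -/
noncomputable def partitionEntropy (A : Set G) (P : G → Set G) : ℝ :=
  -(1 / (Nat.card ↥A : ℝ)) * ∑ᶠ x ∈ A, Real.log ((Nat.card ↥(P x) : ℝ) / (Nat.card ↥A : ℝ))

/-- Normalised entropy `h(Π) = H(Π)/log |Π|`, where `|Π|` is the number of blocks. -/
noncomputable def normalizedEntropy (A : Set G) (P : G → Set G) : ℝ :=
  partitionEntropy A P / Real.log (Nat.card ↥(P '' A))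

/-- The block of `x` in the partition `Π(n,r)` of `S(n)`: elements of `S(n)` joined
to `x` by a path inside the annulus `S(n,r)`. -/
def piBlock (S : Set G) (n r : ℕ) (x : G) : Set G :=
  {y | y ∈ wSphere S n ∧ connectedIn S (wAnnulus S n r) x y}

/-- The block of `x` in the partition `Π(n,r)^∞` of `S(n)^∞`: elements of `S(n)^∞`
joined to `x` by a path inside `S(n,r)^∞`. -/
def piBlockInf (S : Set G) (n r : ℕ) (x : G) : Set G :=
  {y | y ∈ sphereInf S n 0 ∧ connectedIn S (sphereInf S n r) x y}

/-! ### Wreath products -/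

/-- Finitely supported functions `Γ → L`, as a subgroup of the product group. -/
def LampGroup (Γ L : Type*) [Group Γ] [Group L] : Subgroup (Γ → L) where
  carrier := {f | (Function.mulSupport f).Finite}
  one_mem' := by
    refine Set.Finite.subset Set.finite_empty fun x hx => ?_
    exact hx rfl
  mul_mem' := by
    intro a b ha hb
    exact (Set.Finite.union ha hb).subset (Function.mulSupport_mul a b)
  inv_mem' := by
    intro a ha
    refine ha.subset fun x hx => ?_
    simp only [Function.mem_mulSupport, Pi.inv_apply, ne_eq, inv_eq_one] at hx
    exact hx

variable (Γ L : Type*) [Group Γ] [Group L]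

/-- Translation action of `Γ` on finitely supported lamp configurations. -/
noncomputable def shiftAut (γ : Γ) : ↥(LampGroup Γ L) ≃* ↥(LampGroup Γ L) where
  toFun f := ⟨fun x => (f : Γ → L) (γ⁻¹ * x), by
    show (Function.mulSupport fun x => (f : Γ → L) (γ⁻¹ * x)).Finite
    exact Set.Finite.preimage ((mul_right_injective γ⁻¹).injOn) f.2⟩
  invFun f := ⟨fun x => (f : Γ → L) (γ * x), by
    show (Function.mulSupport fun x => (f : Γ → L) (γ * x)).Finite
    exact Set.Finite.preimage ((mul_right_injective γ).injOn) f.2⟩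
  left_inv := by
    intro f
    apply Subtype.ext
    funext x
    simp
  right_inv := by
    intro f
    apply Subtype.ext
    funext x
    simp
  map_mul' := by
    intro f g
    apply Subtype.ext
    rfl

/-- The action homomorphism `Γ →* Aut(⊕_Γ L)`. -/
noncomputable def shiftHom : Γ →* MulAut ↥(LampGroup Γ L) where
  toFun := shiftAut Γ L
  map_one' := by
    apply MulEquiv.ext
    intro f
    apply Subtype.ext
    funext x
    simp [shiftAut]
  map_mul' := by
    intro a b
    apply MulEquiv.ext
    intro f
    apply Subtype.ext
    funext x
    simp [shiftAut, mul_assoc]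

/-- The (restricted) wreath product `Γ ≀ L = Γ ⋉ (⊕_Γ L)`. -/
abbrev Wreath := ↥(LampGroup Γ L) ⋊[shiftHom Γ L] Γ

open Classical in
/-- The element `(e_Γ, δ_l)` of the wreath product: lamp `l` at the identity. -/
noncomputable def lampElt (l : L) : Wreath Γ L :=
  ⟨⟨fun x => if x = (1 : Γ) then l else 1, by
    refine Set.Finite.subset (Set.finite_singleton (1 : Γ)) fun x hx => ?_
    rcases eq_or_ne x 1 with h | h
    · simp [h]
    · exact absurd (if_neg h) hx⟩, 1⟩

/-- The element `(γ, Id)` of the wreath product. -/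
def baseElt (γ : Γ) : Wreath Γ L := ⟨1, γ⟩

/-- The "switch-walk-switch" generating set `L S_Γ L`. -/
noncomputable def swsw (SΓ : Set Γ) : Set (Wreath Γ L) :=
  {g | ∃ l l' : L, ∃ s ∈ SΓ, g = lampElt Γ L l * baseElt Γ L s * lampElt Γ L l'}

/-- The "switch or walk" generating set `S_Γ ∪ S_L`. -/
noncomputable def walkOrSwitch (SΓ : Set Γ) (SL : Set L) : Set (Wreath Γ L) :=
  (baseElt Γ L '' SΓ) ∪ (lampElt Γ L '' SL)

/-- `ℤ` written multiplicatively. -/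
abbrev MZ := Multiplicative ℤ

/-- The generating set `{±1}` of `ℤ`. -/
def genZ : Set MZ := {Multiplicative.ofAdd 1, Multiplicative.ofAdd (-1)}

/-- The ladder `ℤ × ℤ/2ℤ` written multiplicatively. -/
abbrev Ladder := Multiplicative (ℤ × ZMod 2)

/-- The generating set `{(±1,0), (0,1)}` of the ladder. -/
def genLadder : Set Ladder :=
  {Multiplicative.ofAdd (1, 0), Multiplicative.ofAdd (-1, 0), Multiplicative.ofAdd (0, 1)}

/-- The set of vertices of the minimal subtree of a tree containing a set `X`:
all vertices lying on a geodesic between two points of `X`. -/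
def treeHull {V : Type*} (H : SimpleGraph V) (X : Set V) : Set V :=
  {v | ∃ x ∈ X, ∃ y ∈ X, H.dist x v + H.dist v y = H.dist x y}

/-!
A generator `l s l'` of `L S_Γ L` moves the lamplighter along an edge `a — a s` of `Cay(Γ, S_Γ)`
and changes lamps only at the two endpoints `a` and `a s`; conversely, an edge of `Cay(Γ, S_Γ)`
together with an arbitrary change of the lamps at its endpoints is a single generator.
Projecting a path of `Cay(Γ ≀ L)` from `1` to `g` to `Γ` therefore gives a walk from `e_Γ` to `γ`
through every lit lamp and no longer than the path. Conversely, a walk through the lit lamps lifts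
edge by edge, each step switching the lamp it leaves to its final state, the last step also the
lamp it arrives at. The lift needs at least one edge, which is where `g ≠ (e_Γ, δ_s)` enters.
-/

variable {Γ L}

lemma update_mem_lampGroup [DecidableEq Γ] {F : Γ → L} (hF : F ∈ LampGroup Γ L) (a : Γ)
    (l : L) : Function.update F a l ∈ LampGroup Γ L := by
  refine (hF.insert a).subset fun x hx => ?_
  rcases eq_or_ne x a with rfl | hxa
  · exact Set.mem_insert x _
  · rw [Function.mem_mulSupport, Function.update_of_ne hxa] at hx
    exact Set.mem_insert_of_mem a hx

@[simp]
lemma shiftHom_apply_apply (γ : Γ) (F : LampGroup Γ L) (x : Γ) :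
    ((shiftHom Γ L γ F : LampGroup Γ L) : Γ → L) x = (F : Γ → L) (γ⁻¹ * x) :=
  rfl

namespace Wreath

lemma ext_iff' {g h : Wreath Γ L} :
    g = h ↔ (∀ x, (g.left : Γ → L) x = (h.left : Γ → L) x) ∧ g.right = h.right := by
  rw [SemidirectProduct.ext_iff, Subtype.ext_iff, funext_iff]

lemma left_inv_mul_apply (u w : Wreath Γ L) (x : Γ) :
    ((u⁻¹ * w).left : Γ → L) x
      = ((u.left : Γ → L) (u.right * x))⁻¹ * (w.left : Γ → L) (u.right * x) := by
  show ((u.left : Γ → L) (u.right⁻¹⁻¹ * x))⁻¹ * (w.left : Γ → L) (u.right⁻¹⁻¹ * x) = _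
  rw [inv_inv]

open Classical in
@[simp]
lemma left_lampElt_apply (l : L) (x : Γ) :
    ((lampElt Γ L l).left : Γ → L) x = if x = 1 then l else 1 :=
  rfl

@[simp]
lemma right_lampElt (l : L) : (lampElt Γ L l).right = 1 := rfl

@[simp]
lemma left_baseElt_apply (s x : Γ) : ((baseElt Γ L s).left : Γ → L) x = 1 := rfl

@[simp]
lemma right_baseElt (s : Γ) : (baseElt Γ L s).right = s := rfl

end Wreath

open Wreath

variable {SΓ : Set Γ}

lemma mem_swsw_iff {h : Wreath Γ L} :
    h ∈ swsw Γ L SΓ ↔ h.right ∈ SΓ ∧ Function.mulSupport (h.left : Γ → L) ⊆ {1, h.right} := by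
  classical
  constructor
  · rintro ⟨l, l', s, hs, rfl⟩
    refine ⟨by simpa, fun x hx => ?_⟩
    by_contra hx'
    simp only [Set.mem_insert_iff, Set.mem_singleton_iff, not_or] at hx'
    simp_all [inv_mul_eq_one]
  · rintro ⟨hs, hsupp⟩
    -- when `h.right = 1` both switches act on the same lamp
    refine ⟨(h.left : Γ → L) 1, if h.right = 1 then 1 else (h.left : Γ → L) h.right, h.right, hs,
      ext_iff'.2 ⟨fun x => ?_, by simp⟩⟩
    have hx := @hsupp x
    simp only [Function.mem_mulSupport, Set.mem_insert_iff, Set.mem_singleton_iff] at hx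
    by_cases hx1 : x = 1 <;> by_cases hxs : x = h.right <;> simp_all [inv_mul_eq_one]

lemma inv_mul_mem_swsw_iff {u w : Wreath Γ L} :
    u⁻¹ * w ∈ swsw Γ L SΓ ↔ u.right⁻¹ * w.right ∈ SΓ ∧
      ∀ x, (u.left : Γ → L) x ≠ (w.left : Γ → L) x → x = u.right ∨ x = w.right := by
  rw [mem_swsw_iff, SemidirectProduct.mul_right, SemidirectProduct.inv_right]
  refine and_congr_right' ((Equiv.mulLeft u.right).forall_congr fun {x} => ?_)
  rw [Function.mem_mulSupport, left_inv_mul_apply]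
  simp [inv_mul_eq_one, eq_inv_mul_iff_mul_eq]

lemma right_eq_or_adj_of_adj_swsw {u w : Wreath Γ L} (h : (cayley _ (swsw Γ L SΓ)).Adj u w) :
    (u.right = w.right ∨ (cayley Γ SΓ).Adj u.right w.right) ∧
      ∀ x, (u.left : Γ → L) x ≠ (w.left : Γ → L) x → x = u.right ∨ x = w.right := by
  rcases h.2 with huw | hwu
  · obtain ⟨hs, hlamps⟩ := inv_mul_mem_swsw_iff.1 huw
    exact ⟨(em _).imp_right fun hne => ⟨hne, Or.inl hs⟩, hlamps⟩
  · obtain ⟨hs, hlamps⟩ := inv_mul_mem_swsw_iff.1 hwu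
    refine ⟨(em _).imp_right fun hne => ⟨hne, Or.inr hs⟩, fun x hx => ?_⟩
    exact (hlamps x (Ne.symm hx)).symm

lemma adj_swsw_of_adj_right {u w : Wreath Γ L} (h : (cayley Γ SΓ).Adj u.right w.right)
    (hlamps : ∀ x, (u.left : Γ → L) x ≠ (w.left : Γ → L) x → x = u.right ∨ x = w.right) :
    (cayley _ (swsw Γ L SΓ)).Adj u w := by
  refine ⟨fun huw => h.ne (congrArg _ huw), ?_⟩
  rcases h.2 with hs | hs
  · exact Or.inl (inv_mul_mem_swsw_iff.2 ⟨hs, hlamps⟩)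
  · exact Or.inr (inv_mul_mem_swsw_iff.2 ⟨hs, fun x hx => (hlamps x (Ne.symm hx)).symm⟩)

lemma exists_walk_right_of_walk {u v : Wreath Γ L} (p : (cayley _ (swsw Γ L SΓ)).Walk u v) :
    ∃ q : (cayley Γ SΓ).Walk u.right v.right, q.length ≤ p.length ∧
      ∀ x, (u.left : Γ → L) x ≠ (v.left : Γ → L) x → x ∈ q.support := by
  induction p with
  | nil => exact ⟨.nil, le_rfl, fun x hx => (hx rfl).elim⟩
  | @cons u w v h p ih =>
    obtain ⟨q, hq, hsupp⟩ := ih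
    obtain ⟨hright, hlamps⟩ := right_eq_or_adj_of_adj_swsw h
    have hmem : ∀ x, (u.left : Γ → L) x ≠ (v.left : Γ → L) x →
        x = u.right ∨ x ∈ q.support := by
      intro x hx
      by_cases huw : (u.left : Γ → L) x = (w.left : Γ → L) x
      · exact Or.inr (hsupp x (huw ▸ hx))
      · exact (hlamps x huw).imp_right fun (hxw : x = w.right) => hxw ▸ q.start_mem_support
    rcases hright with hright | hadj
    · refine ⟨q.copy hright.symm rfl, by simpa using hq.trans p.length.le_succ, fun x hx => ?_⟩
      rw [SimpleGraph.Walk.support_copy]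
      refine (hmem x hx).elim (fun hxu => ?_) id
      rw [hxu, hright]
      exact q.start_mem_support
    · refine ⟨.cons hadj q, by simpa using hq, fun x hx => ?_⟩
      rw [SimpleGraph.Walk.support_cons, List.mem_cons]
      exact hmem x hx

lemma exists_walk_of_walk_right {a b : Γ} (q : (cayley Γ SΓ).Walk a b) (hq : 0 < q.length)
    (F₀ F₁ : LampGroup Γ L) (hF : ∀ x, (F₀ : Γ → L) x ≠ (F₁ : Γ → L) x → x ∈ q.support) :
    ∃ p : (cayley _ (swsw Γ L SΓ)).Walk ⟨F₀, a⟩ ⟨F₁, b⟩, p.length = q.length := by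
  classical
  induction q generalizing F₀ with
  | nil => exact absurd hq (lt_irrefl 0)
  | @cons a c b h q ih =>
    cases q with
    | nil =>
      have hadj : (cayley _ (swsw Γ L SΓ)).Adj ⟨F₀, a⟩ ⟨F₁, c⟩ :=
        adj_swsw_of_adj_right h fun x hx => by simpa using hF x hx
      exact ⟨.cons hadj .nil, rfl⟩
    | cons h' q' =>
      set F' : LampGroup Γ L :=
        ⟨Function.update F₀ a ((F₁ : Γ → L) a), update_mem_lampGroup F₀.2 _ _⟩
      have hadj : (cayley _ (swsw Γ L SΓ)).Adj ⟨F₀, a⟩ ⟨F', c⟩ := by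
        refine adj_swsw_of_adj_right h fun x hx => Or.inl ?_
        by_contra hxa
        exact hx (Function.update_of_ne hxa _ _).symm
      obtain ⟨p, hp⟩ := ih (by simp) F' fun x hx => by
        rcases eq_or_ne x a with rfl | hxa
        · exact (hx (by simp [F'])).elim
        · have hF'x : (F' : Γ → L) x = (F₀ : Γ → L) x := Function.update_of_ne hxa _ _
          simpa [hxa] using hF x (hF'x ▸ hx)
      exact ⟨.cons hadj p, by simp [hp]⟩

theorem stmt_1_general {Γ L : Type*} [Group Γ] [Group L]
    (SΓ : Set Γ) (γ : Γ) (f : Γ → L) (hf : f ∈ LampGroup Γ L)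
    (hg : ¬ ∃ s : L, (⟨⟨f, hf⟩, γ⟩ : Wreath Γ L) = lampElt Γ L s) :
    wlen (swsw Γ L SΓ) (⟨⟨f, hf⟩, γ⟩ : Wreath Γ L)
      = tsDist (cayley Γ SΓ) 1 (Function.mulSupport f) γ := by
  rw [wlen, SimpleGraph.dist_eq_sInf, tsDist]
  -- each set of lengths dominates the other; this also covers both being empty (both sides `0`)
  apply csInf_eq_csInf_of_forall_exists_le
  · rintro _ ⟨p, rfl⟩
    obtain ⟨q, hq, hsupp⟩ := exists_walk_right_of_walk p
    exact ⟨q.length, ⟨q, rfl, fun x hx => hsupp x (Ne.symm hx)⟩, hq⟩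
  · rintro _ ⟨q, rfl, hq⟩
    have hpos : 0 < q.length := by
      cases q with
      | nil =>
        refine (hg ⟨f 1, ext_iff'.2 ⟨fun x => ?_, rfl⟩⟩).elim
        rcases eq_or_ne x 1 with rfl | hx
        · simp
        · simpa [hx] using mt (hq x) (by simpa using hx)
      | cons => exact Nat.succ_pos _
    obtain ⟨p, hp⟩ := exists_walk_of_walk_right q hpos 1 ⟨f, hf⟩ fun x hx => hq x (Ne.symm hx)
    exact ⟨p.length, ⟨p, rfl⟩, hp.le⟩

/-- In `Γ ≀ L` with the switch-walk-switch generating set `L S_Γ L`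
(`S_L = L` finite), the word length of `g = (γ, f)` not of the form `(e_Γ, δ_s)` is the
travelling salesman distance from `e_Γ` to `γ` through the support of `f`. -/
theorem stmt_1 {Γ L : Type*} [Group Γ] [Group L] [Finite L]
    (SΓ : Set Γ) (hfin : SΓ.Finite) (hgen : Subgroup.closure SΓ = ⊤)
    (γ : Γ) (f : Γ → L) (hf : f ∈ LampGroup Γ L)
    (hg : ¬ ∃ s : L, (⟨⟨f, hf⟩, γ⟩ : Wreath Γ L) = lampElt Γ L s) :
    wlen (swsw Γ L SΓ) (⟨⟨f, hf⟩, γ⟩ : Wreath Γ L)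
      = tsDist (cayley Γ SΓ) 1 (Function.mulSupport f) γ :=
  stmt_1_general SΓ γ f hf hg
end

section
/- Let G be an infinite group with finite generating set S, and let 0 ≤ ℓ ≤ k and n ≥ 0. Then S(n,k)^∞ is connected if and only if any two elements of S(n+ℓ) ∩ B(n−1)^{c,∞} are connected by paths staying inside S(n,k)^∞. -/
variable {G : Type*} [Group G]

variable (Γ L : Type*) [Group Γ] [Group L]

/-!
A vertex of `S(n,k)^∞` above level `n + l` reaches `S(n + l)` by descending along a geodesic
towards the identity; a vertex below it follows a path to infinity inside `B(n-1)^{c,∞}` until the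
path first reaches level `n + l`. Either path stays in the annulus and in the infinite part, so
every vertex of `S(n,k)^∞` is joined inside `S(n,k)^∞` to a point of
`S(n + l) ∩ B(n-1)^{c,∞}`.
Nonemptiness of `S(n,k)^∞` comes from pigeonhole: every point of the infinite set
`B(n-1)ᶜ` descends to one of the finitely many points of `S(n)`.
-/

open SimpleGraph Pointwise

namespace SimpleGraph.Walk

variable {V : Type*} {Γ : SimpleGraph V}

theorem exists_prefix_eq_level {f : V → ℕ} (hf : ∀ ⦃a b⦄, Γ.Adj a b → f b ≤ f a + 1)
    {t : ℕ} :
    ∀ {u v : V} (p : Γ.Walk u v), f u ≤ t → t ≤ f v →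
      ∃ x, ∃ q : Γ.Walk u x, f x = t ∧ ∀ y ∈ q.support, y ∈ p.support ∧ f y ≤ t
  | u, _, p, hu, hv => by
    rcases hu.eq_or_lt with hu' | hu'
    · refine ⟨u, nil, hu', fun y hy => ?_⟩
      rw [support_nil, List.mem_singleton] at hy
      subst hy
      exact ⟨p.start_mem_support, hu⟩
    cases p with
    | nil => omega
    | cons hadj p =>
      obtain ⟨x, q, hx, hq⟩ := exists_prefix_eq_level hf p (by have := hf hadj; omega) hv
      refine ⟨x, cons hadj q, hx, fun y hy => ?_⟩
      rcases List.mem_cons.1 (support_cons _ _ ▸ hy) with rfl | hy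
      · exact ⟨start_mem_support _, hu⟩
      · exact ⟨List.mem_cons_of_mem _ (hq y hy).1, (hq y hy).2⟩

end SimpleGraph.Walk

section Cayley

variable {S : Set G}

lemma cayley_reachable_mul_right {s : G} (hs : s ∈ S) (g : G) :
    (cayley G S).Reachable g (g * s) := by
  rcases eq_or_ne s 1 with rfl | hs1
  · rw [mul_one]
  · exact Adj.reachable ⟨by simpa using hs1, Or.inl (by simpa using hs)⟩

lemma cayley_connected (hgen : Subgroup.closure S = ⊤) : (cayley G S).Connected := by
  have hreach (g : G) : (cayley G S).Reachable 1 g := by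
    induction (hgen ▸ Subgroup.mem_top g : g ∈ Subgroup.closure S)
      using Subgroup.closure_induction_right with
    | one => rfl
    | mul_right x _ s hs ih => exact ih.trans (cayley_reachable_mul_right hs x)
    | mul_inv_cancel x _ s hs ih =>
      have hback := (cayley_reachable_mul_right hs (x * s⁻¹)).symm
      rw [inv_mul_cancel_right] at hback
      exact ih.trans hback
  exact connected_iff_exists_forall_reachable _ |>.2 ⟨1, hreach⟩

lemma inv_mul_mem_of_cayley_adj {g h : G} (hadj : (cayley G S).Adj g h) :
    g⁻¹ * h ∈ S ∪ S⁻¹ := by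
  rcases hadj.2 with hs | hs
  · exact Or.inl hs
  · exact Or.inr (by simpa using hs)

lemma wlen_le_of_adj {g h : G} (hadj : (cayley G S).Adj g h) : wlen S h ≤ wlen S g + 1 := by
  unfold wlen
  simpa [dist_eq_one_iff_adj.2 hadj] using hadj.reachable.dist_triangle_right (1 : G)

lemma wlen_eq_zero_iff (hgen : Subgroup.closure S = ⊤) {g : G} : wlen S g = 0 ↔ g = 1 := by
  rw [wlen, (cayley_connected hgen).dist_eq_zero_iff, eq_comm]

lemma exists_adj_wlen_eq {u : G} {m : ℕ} (hu : wlen S u = m + 1) :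
    ∃ h, (cayley G S).Adj u h ∧ wlen S h = m := by
  obtain ⟨p, hp⟩ := exists_walk_of_dist_ne_zero (G := cayley G S) (u := 1) (v := u)
    (by rw [← wlen, hu]; omega)
  cases hrev : p.reverse with
  | nil => simp_all [wlen]
  | cons hadj q =>
    have hq : q.length = m := by
      have := congrArg Walk.length hrev
      simp only [Walk.length_reverse, Walk.length_cons] at this
      rw [← wlen, hu] at hp
      omega
    refine ⟨_, hadj, le_antisymm ?_ ?_⟩
    · simpa [wlen, hq] using dist_le q.reverse
    · have := wlen_le_of_adj hadj.symm
      omega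

lemma finite_wBall (hS : S.Finite) (hgen : Subgroup.closure S = ⊤) (n : ℕ) :
    (wBall S n).Finite := by
  induction n with
  | zero =>
    refine (Set.finite_singleton 1).subset fun g hg => ?_
    exact (wlen_eq_zero_iff hgen).1 (Nat.le_zero.1 hg)
  | succ n ih =>
    refine (ih.mul ((hS.union hS.inv).insert 1)).subset fun g (hg : wlen S g ≤ n + 1) => ?_
    rcases hg.lt_or_eq with hlt | heq
    · exact ⟨g, Nat.lt_succ_iff.1 hlt, 1, Set.mem_insert _ _, mul_one g⟩
    · obtain ⟨h, hadj, hh⟩ := exists_adj_wlen_eq heq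
      exact ⟨h, hh.le, h⁻¹ * g, Or.inr (inv_mul_mem_of_cayley_adj hadj.symm),
        mul_inv_cancel_left h g⟩

lemma finite_wSphere (hS : S.Finite) (hgen : Subgroup.closure S = ⊤) (n : ℕ) :
    (wSphere S n).Finite :=
  (finite_wBall hS hgen n).subset fun _ hg => le_of_eq hg

lemma exists_walk_to_wSphere {t : ℕ} {u : G} (ht : t ≤ wlen S u) :
    ∃ x, ∃ w : (cayley G S).Walk u x,
      wlen S x = t ∧ ∀ y ∈ w.support, t ≤ wlen S y ∧ wlen S y ≤ wlen S u := by
  obtain ⟨d, hd⟩ := Nat.exists_eq_add_of_le ht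
  induction d generalizing u with
  | zero => exact ⟨u, .nil, hd, fun y hy => by simp_all⟩
  | succ d ih =>
    obtain ⟨h, hadj, hh⟩ := exists_adj_wlen_eq (m := t + d) hd
    obtain ⟨x, w, hx, hw⟩ := ih (by omega) hh
    refine ⟨x, .cons hadj w, hx, fun y hy => ?_⟩
    rcases List.mem_cons.1 (Walk.support_cons _ _ ▸ hy) with rfl | hy
    · omega
    · have := hw y hy
      omega

end Cayley

section ConnectedIn

variable {S A : Set G} {x y z : G}

lemma connectedIn.symm (h : connectedIn S A x y) : connectedIn S A y x := by
  obtain ⟨w, hw⟩ := h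
  exact ⟨w.reverse, fun v hv => hw v (by simpa using hv)⟩

lemma connectedIn.trans (hxy : connectedIn S A x y) (hyz : connectedIn S A y z) :
    connectedIn S A x z := by
  obtain ⟨w₁, hw₁⟩ := hxy
  obtain ⟨w₂, hw₂⟩ := hyz
  refine ⟨w₁.append w₂, fun v hv => ?_⟩
  rcases Walk.mem_support_append_iff w₁ w₂ |>.1 hv with hv | hv
  exacts [hw₁ v hv, hw₂ v hv]

lemma connectedIn.mem_right (h : connectedIn S A x y) : y ∈ A :=
  let ⟨w, hw⟩ := h
  hw y w.end_mem_support

lemma connectedIn_coe_iff {x y : A} :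
    connectedIn S A x y ↔ ((cayley G S).induce A).Reachable x y := by
  constructor
  · rintro ⟨w, hw⟩
    exact ⟨w.induce A hw⟩
  · rintro ⟨w⟩
    refine ⟨w.map (Embedding.induce A).toHom, fun v hv => ?_⟩
    obtain ⟨a, -, rfl⟩ := List.mem_map.1 ((Walk.support_map _ w) ▸ hv)
    exact a.2

lemma setOf_connectedIn_eq_image (hx : x ∈ A) : {y | connectedIn S A x y} =
    Subtype.val '' {w : A | ((cayley G S).induce A).Reachable ⟨x, hx⟩ w} := by
  ext y
  refine ⟨fun h => ⟨⟨y, h.mem_right⟩, connectedIn_coe_iff.1 h, rfl⟩, ?_⟩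
  rintro ⟨w, hw, rfl⟩
  exact connectedIn_coe_iff.2 hw

lemma mem_infPart_iff : x ∈ infPart S A ↔ x ∈ A ∧ {y | connectedIn S A x y}.Infinite := by
  refine ⟨fun ⟨hx, hinf⟩ => ⟨hx, ?_⟩, fun ⟨hx, hinf⟩ => ⟨hx, ?_⟩⟩
  · rwa [setOf_connectedIn_eq_image hx, Set.infinite_image_iff Subtype.val_injective.injOn]
  · rwa [setOf_connectedIn_eq_image hx, Set.infinite_image_iff Subtype.val_injective.injOn] at hinf

lemma connectedIn.mem_infPart (h : connectedIn S A x y) (hx : x ∈ infPart S A) :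
    y ∈ infPart S A := by
  rw [mem_infPart_iff] at hx ⊢
  exact ⟨h.mem_right, hx.2.mono fun z hz => h.symm.trans hz⟩

lemma exists_connectedIn_lt_wlen (hS : S.Finite) (hgen : Subgroup.closure S = ⊤)
    (hx : x ∈ infPart S A) (m : ℕ) : ∃ y, connectedIn S A x y ∧ m < wlen S y := by
  obtain ⟨y, hy, hym⟩ := ((mem_infPart_iff.1 hx).2.sdiff (finite_wBall hS hgen m)).nonempty
  exact ⟨y, hy, not_le.1 hym⟩

lemma connectedIn_inter_infPart_of_walk {B : Set G} (hBA : B ⊆ A) (hx : x ∈ infPart S A)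
    (w : (cayley G S).Walk x y) (hw : ∀ v ∈ w.support, v ∈ B) :
    connectedIn S (B ∩ infPart S A) x y := by
  classical
  refine ⟨w, fun v hv => ⟨hw v hv, ?_⟩⟩
  have hxv : connectedIn S A x v := ⟨w.takeUntil v hv,
    fun z hz => hBA (hw z (w.support_takeUntil_subset_support hv hz))⟩
  exact hxv.mem_infPart hx

end ConnectedIn

section SphereInf

variable {S : Set G}

lemma exists_wlen_eq_mem_infPart [Infinite G] (hS : S.Finite) (hgen : Subgroup.closure S = ⊤)
    (n : ℕ) : ∃ x, wlen S x = n ∧ x ∈ infPart S {g | n ≤ wlen S g} := by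
  set A := {g | n ≤ wlen S g}
  have hAinf : A.Infinite := by
    have hAc : Aᶜ.Finite :=
      (finite_wBall hS hgen n).subset fun g (hg : ¬n ≤ wlen S g) => (not_le.1 hg).le
    simpa using hAc.infinite_compl
  have hcover : A ⊆ ⋃ x ∈ wSphere S n, {y | connectedIn S A x y} := by
    intro u hu
    obtain ⟨x, w, hx, hw⟩ := exists_walk_to_wSphere hu
    exact Set.mem_biUnion hx (connectedIn.symm ⟨w, fun v hv => (hw v hv).1⟩)
  obtain ⟨x, hx, hinf⟩ : ∃ x ∈ wSphere S n, {y | connectedIn S A x y}.Infinite := by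
    by_contra! h
    exact hAinf (((finite_wSphere hS hgen n).biUnion h).subset hcover)
  exact ⟨x, hx, mem_infPart_iff.2 ⟨hx.ge, hinf⟩⟩

lemma mem_sphereInf_of_mem_wSphere {l k n : ℕ} (hlk : l ≤ k) {x : G}
    (hx : x ∈ wSphere S (n + l) ∩ infPart S {g | n ≤ wlen S g}) : x ∈ sphereInf S n k :=
  ⟨⟨by rw [hx.1.out]; omega, by rw [hx.1.out]; omega⟩, hx.2⟩

lemma exists_connectedIn_wSphere_of_mem_sphereInf (hS : S.Finite)
    (hgen : Subgroup.closure S = ⊤) {l k n : ℕ} (hlk : l ≤ k) {u : G}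
    (hu : u ∈ sphereInf S n k) :
    ∃ x ∈ wSphere S (n + l) ∩ infPart S {g | n ≤ wlen S g},
      connectedIn S (sphereInf S n k) u x := by
  obtain ⟨⟨hun, hunk⟩, huinf⟩ := hu
  suffices ∃ x, ∃ w : (cayley G S).Walk u x,
      wlen S x = n + l ∧ ∀ v ∈ w.support, v ∈ wAnnulus S n k by
    obtain ⟨x, w, hx, hw⟩ := this
    have hux := connectedIn_inter_infPart_of_walk (fun _ hv => hv.1) huinf w hw
    exact ⟨x, ⟨hx, hux.mem_right.2⟩, hux⟩
  rcases le_or_gt (n + l) (wlen S u) with hup | hdown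
  · obtain ⟨x, w, hx, hw⟩ := exists_walk_to_wSphere hup
    exact ⟨x, w, hx, fun v hv => ⟨by have := (hw v hv).1; omega, (hw v hv).2.trans hunk⟩⟩
  · obtain ⟨p, ⟨w, hw⟩, hp⟩ := exists_connectedIn_lt_wlen hS hgen huinf (n + l)
    obtain ⟨x, q, hx, hq⟩ := w.exists_prefix_eq_level (fun _ _ => wlen_le_of_adj) hdown.le hp.le
    exact ⟨x, q, hx, fun v hv => ⟨hw v (hq v hv).1, (hq v hv).2.trans (by omega)⟩⟩

end SphereInf

/-- For `0 ≤ ℓ ≤ k`, the graph `S(n,k)^∞` is connected iff any two elements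
of `S(n+ℓ) ∩ B(n-1)^{c,∞}` are connected by paths staying inside `S(n,k)^∞`. -/
theorem stmt_2 {G : Type*} [Group G] [Infinite G] (S : Set G) (hSfin : S.Finite)
    (hgen : Subgroup.closure S = ⊤) (l k n : ℕ) (hlk : l ≤ k) :
    SpheresConn S n k ↔
      ∀ x y : G, x ∈ wSphere S (n + l) ∩ infPart S {g | n ≤ wlen S g} →
        y ∈ wSphere S (n + l) ∩ infPart S {g | n ≤ wlen S g} →
        connectedIn S (sphereInf S n k) x y := by
  refine ⟨fun hconn x y hx hy => ?_, fun H => ?_⟩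
  · exact connectedIn_coe_iff.2 <| hconn.preconnected
      ⟨x, mem_sphereInf_of_mem_wSphere hlk hx⟩ ⟨y, mem_sphereInf_of_mem_wSphere hlk hy⟩
  · obtain ⟨b, hb, hbinf⟩ := exists_wlen_eq_mem_infPart hSfin hgen n
    have hbmem : b ∈ sphereInf S n k := ⟨⟨hb.ge, by omega⟩, hbinf⟩
    obtain ⟨x₀, hx₀, hbx₀⟩ :=
      exists_connectedIn_wSphere_of_mem_sphereInf hSfin hgen hlk hbmem
    refine (connected_iff_exists_forall_reachable _).2 ⟨⟨b, hbmem⟩, fun u => ?_⟩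
    obtain ⟨x, hx, hux⟩ := exists_connectedIn_wSphere_of_mem_sphereInf hSfin hgen hlk u.2
    exact connectedIn_coe_iff.1 (hbx₀.trans ((H x₀ x hx₀ hx).trans hux.symm))
end

section
/- Let L be a finite group and consider Z ≀ L with the switch-walk-switch generating set L{±1}L. For every g = (z,f) ∈ Z ≀ L which is not of the form (0, δ_s) for s ∈ L, the word length is |g| = 2·b(g) + 2·|a(g)| − |z|. -/
variable {G : Type*} [Group G]

variable (Γ L : Type*) [Group Γ] [Group L]

/-!
A generator `l (±1) l'` moves the cursor by one and changes lamps only at its two endpoints.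
Hence a walk from `1` to `g = (z, f)` passes through every lamp position of `f`, in particular
through `a` and `b`; as the cursor is `1`-Lipschitz along walks, visiting `a` and `b` in either
order and ending at `z` costs at least `min (2b - 2a - z) (2b - 2a + z) = 2b - 2a - |z|`.
This is attained by walking to the end of `[a, b]` farther from `z`, then to the other end, then
back to `z`, switching every lamp while passing it.
-/

theorem SimpleGraph.Walk.abs_sub_le_length {V : Type*} {G : SimpleGraph V} (φ : V → ℤ)
    (hφ : ∀ u v, G.Adj u v → |φ v - φ u| ≤ 1) {x y : V} (p : G.Walk x y) :
    |φ y - φ x| ≤ p.length := by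
  induction p with
  | nil => simp
  | @cons u v w huv p ih =>
    calc |φ w - φ u| ≤ |φ w - φ v| + |φ v - φ u| := abs_sub_le _ _ _
      _ ≤ p.length + 1 := add_le_add ih (hφ u v huv)
      _ = (p.cons huv).length := by simp

theorem SimpleGraph.Walk.min_le_length_of_mem_support {V : Type*} {G : SimpleGraph V}
    (φ : V → ℤ) (hφ : ∀ u v, G.Adj u v → |φ v - φ u| ≤ 1) {x y u v : V} (p : G.Walk x y)
    (hu : u ∈ p.support) (hv : v ∈ p.support) :
    min (|φ u - φ x| + |φ v - φ u| + |φ y - φ v|) (|φ v - φ x| + |φ u - φ v| + |φ y - φ u|)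
      ≤ p.length := by
  obtain ⟨q, r, rfl⟩ := mem_support_iff_exists_append.mp hu
  rw [mem_support_append_iff] at hv
  rw [length_append, Nat.cast_add]
  rcases hv with hv | hv
  · obtain ⟨q₁, q₂, rfl⟩ := mem_support_iff_exists_append.mp hv
    have h₁ := q₁.abs_sub_le_length φ hφ
    have h₂ := q₂.abs_sub_le_length φ hφ
    have h₃ := r.abs_sub_le_length φ hφ
    rw [length_append, Nat.cast_add]
    exact min_le_of_right_le (by linarith)
  · obtain ⟨r₁, r₂, rfl⟩ := mem_support_iff_exists_append.mp hv
    have h₁ := q.abs_sub_le_length φ hφ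
    have h₂ := r₁.abs_sub_le_length φ hφ
    have h₃ := r₂.abs_sub_le_length φ hφ
    rw [length_append, Nat.cast_add]
    exact min_le_of_left_le (by linarith)

theorem cayley_adj_mul {S : Set G} {g s : G} (hs : s ∈ S) (hs₁ : s ≠ 1) :
    (cayley G S).Adj g (g * s) :=
  ⟨by simpa using hs₁, Or.inl (by simpa using hs)⟩

theorem exists_walk_mul_length_le {S : Set G} {g s : G} (hs : s ∈ S) (hs₁ : s ≠ 1) {n : ℕ}
    (h : ∃ p : (cayley G S).Walk 1 g, p.length ≤ n) :
    ∃ p : (cayley G S).Walk 1 (g * s), p.length ≤ n + 1 :=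
  let ⟨p, hp⟩ := h
  ⟨p.concat (cayley_adj_mul hs hs₁), by simpa using hp⟩

section Lamps

variable {Γ L}

noncomputable def switchWalkSwitch (l : L) (s : Γ) (l' : L) : Wreath Γ L :=
  lampElt Γ L l * baseElt Γ L s * lampElt Γ L l'

theorem switchWalkSwitch_mem_swsw {SΓ : Set Γ} {s : Γ} (hs : s ∈ SΓ) (l l' : L) :
    switchWalkSwitch l s l' ∈ swsw Γ L SΓ :=
  ⟨l, l', s, hs, rfl⟩

@[simp]
theorem switchWalkSwitch_right (l : L) (s : Γ) (l' : L) : (switchWalkSwitch l s l').right = s := by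
  simp [switchWalkSwitch, lampElt, baseElt]

theorem switchWalkSwitch_ne_one {s : Γ} (hs : s ≠ 1) (l l' : L) : switchWalkSwitch l s l' ≠ 1 :=
  fun h => hs (by simpa using congrArg SemidirectProduct.right h)

variable [DecidableEq Γ]

def lampAt (γ : Γ) (l : L) : LampGroup Γ L :=
  ⟨Pi.mulSingle γ l, (Set.finite_singleton γ).subset Pi.mulSupport_mulSingle_subset⟩

@[simp]
theorem coe_lampAt (γ : Γ) (l : L) : (lampAt γ l : Γ → L) = Pi.mulSingle γ l := rfl

@[simp]
theorem lampAt_one (γ : Γ) : lampAt γ (1 : L) = 1 :=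
  Subtype.ext (Pi.mulSingle_one γ)

theorem lampAt_mul (γ : Γ) (l l' : L) : lampAt γ l * lampAt γ l' = lampAt γ (l * l') :=
  Subtype.ext <| by simp only [Subgroup.coe_mul, coe_lampAt, Pi.mulSingle_mul]

@[simp]
theorem shiftHom_lampAt (δ γ : Γ) (l : L) : shiftHom Γ L δ (lampAt γ l) = lampAt (δ * γ) l := by
  ext x
  simp [shiftHom, shiftAut, Pi.mulSingle_apply, inv_mul_eq_iff_eq_mul]

theorem lampElt_eq_inl (l : L) : lampElt Γ L l = SemidirectProduct.inl (lampAt 1 l) := by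
  ext x
  · simp [lampElt, Pi.mulSingle_apply]
  · rfl

theorem mk_one_eq_lampElt {f : Γ → L} (hf : f ∈ LampGroup Γ L) (h : ∀ x, f x ≠ 1 → x = 1) :
    (⟨⟨f, hf⟩, 1⟩ : Wreath Γ L) = lampElt Γ L (f 1) := by
  ext x
  · by_cases hx : x = 1
    · simp [lampElt, hx]
    · simpa [lampElt, hx] using not_imp_comm.mp (h x) hx
  · rfl

theorem eq_lampAt_mul_lampAt {F : LampGroup Γ L} {γ δ : Γ} (hγδ : γ ≠ δ)
    (h : ∀ x, (F : Γ → L) x ≠ 1 → x = γ ∨ x = δ) :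
    F = lampAt γ ((F : Γ → L) γ) * lampAt δ ((F : Γ → L) δ) := by
  ext x
  by_cases hxγ : x = γ
  · simp [hxγ, hγδ]
  by_cases hxδ : x = δ
  · simp [hxδ, Ne.symm hγδ]
  simpa [hxγ, hxδ] using not_imp_comm.mp (h x) (by tauto)

theorem mul_lampAt_inv_apply_ne_one {F : LampGroup Γ L} {m x : Γ}
    (h : ((F * lampAt m ((F : Γ → L) m)⁻¹ : LampGroup Γ L) : Γ → L) x ≠ 1) :
    x ≠ m ∧ (F : Γ → L) x ≠ 1 := by
  by_cases hx : x = m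
  · simp [hx] at h
  · simpa [hx, Pi.mulSingle_apply] using h

theorem mul_switchWalkSwitch (g : Wreath Γ L) (l : L) (s : Γ) (l' : L) :
    g * switchWalkSwitch l s l'
      = ⟨g.left * lampAt g.right l * lampAt (g.right * s) l', g.right * s⟩ := by
  simp only [switchWalkSwitch, lampElt_eq_inl, baseElt]
  ext <;> simp [mul_assoc]

theorem left_mul_switchWalkSwitch_apply (g : Wreath Γ L) (l : L) (s : Γ) (l' : L) {x : Γ}
    (hx : x ≠ g.right) (hxs : x ≠ g.right * s) :
    ((g * switchWalkSwitch l s l').left : Γ → L) x = (g.left : Γ → L) x := by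
  simp [mul_switchWalkSwitch, hx, hxs]

theorem exists_of_cayley_swsw_adj {SΓ : Set Γ} {g h : Wreath Γ L}
    (hgh : (cayley _ (swsw Γ L SΓ)).Adj g h) :
    (∃ s ∈ SΓ, h.right = g.right * s ∨ g.right = h.right * s) ∧
      ∀ x, x ≠ g.right → x ≠ h.right → (h.left : Γ → L) x = (g.left : Γ → L) x := by
  obtain ⟨-, ⟨l, l', s, hs, hgh⟩ | ⟨l, l', s, hs, hgh⟩⟩ := hgh
  · change g⁻¹ * h = switchWalkSwitch l s l' at hgh
    rw [inv_mul_eq_iff_eq_mul] at hgh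
    subst hgh
    refine ⟨⟨s, hs, Or.inl (by simp)⟩, fun x hx hxh => ?_⟩
    exact left_mul_switchWalkSwitch_apply g l s l' hx (by simpa using hxh)
  · change h⁻¹ * g = switchWalkSwitch l s l' at hgh
    rw [inv_mul_eq_iff_eq_mul] at hgh
    subst hgh
    refine ⟨⟨s, hs, Or.inr (by simp)⟩, fun x hxg hx => ?_⟩
    exact (left_mul_switchWalkSwitch_apply h l s l' hx
      (by simpa using hxg)).symm

theorem exists_mem_support_right_eq {SΓ : Set Γ} {g h : Wreath Γ L}
    (p : (cayley _ (swsw Γ L SΓ)).Walk g h) {m : Γ}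
    (hm : (h.left : Γ → L) m ≠ (g.left : Γ → L) m) :
    ∃ v ∈ p.support, v.right = m := by
  induction p with
  | nil => exact absurd rfl hm
  | @cons u v w huv p ih =>
    by_contra! hne
    have hu : m ≠ u.right := (hne u (by simp)).symm
    have hv : m ≠ v.right := (hne v (by simp)).symm
    obtain ⟨x, hx, hxm⟩ := ih (by rwa [(exists_of_cayley_swsw_adj huv).2 m hu hv])
    exact hne x (by simp [hx]) hxm

end Lamps

section Lamplighter

open Multiplicative SimpleGraph

variable {L}

theorem toAdd_eq_of_mem_genZ {s : MZ} (hs : s ∈ genZ) : toAdd s = 1 ∨ toAdd s = -1 := by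
  rcases hs with rfl | rfl <;> simp

theorem one_notMem_genZ : (1 : MZ) ∉ genZ := by
  rintro (h | h) <;> have := congrArg toAdd h <;> simp at this

theorem abs_toAdd_right_sub_le_one {g h : Wreath MZ L}
    (hgh : (cayley _ (swsw MZ L genZ)).Adj g h) :
    |toAdd h.right - toAdd g.right| ≤ 1 := by
  obtain ⟨s, hs, hgh | hgh⟩ := (exists_of_cayley_swsw_adj hgh).1 <;>
    rw [hgh, toAdd_mul] <;> rcases toAdd_eq_of_mem_genZ hs with h | h <;> simp [h]

theorem exists_mem_support_toAdd_right_eq {f : MZ → L} (hf : f ∈ LampGroup MZ L) {z t : ℤ}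
    (p : (cayley _ (swsw MZ L genZ)).Walk 1 ⟨⟨f, hf⟩, ofAdd z⟩)
    (ht : t ∈ {t : ℤ | f (ofAdd t) ≠ 1} ∪ {0, z}) :
    ∃ v ∈ p.support, toAdd v.right = t := by
  rcases ht with ht | rfl | rfl
  · obtain ⟨v, hv, hvt⟩ := exists_mem_support_right_eq p (m := ofAdd t) ht
    exact ⟨v, hv, by simp [hvt]⟩
  · exact ⟨1, p.start_mem_support, rfl⟩
  · exact ⟨_, p.end_mem_support, rfl⟩

theorem le_length_of_isLeast_of_isGreatest {f : MZ → L} (hf : f ∈ LampGroup MZ L) {z a b : ℤ}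
    (ha : IsLeast ({t : ℤ | f (ofAdd t) ≠ 1} ∪ {0, z}) a)
    (hb : IsGreatest ({t : ℤ | f (ofAdd t) ≠ 1} ∪ {0, z}) b)
    (p : (cayley _ (swsw MZ L genZ)).Walk 1 ⟨⟨f, hf⟩, ofAdd z⟩) :
    2 * b - 2 * a - |z| ≤ p.length := by
  obtain ⟨u, hu, hua⟩ := exists_mem_support_toAdd_right_eq hf p ha.1
  obtain ⟨v, hv, hvb⟩ := exists_mem_support_toAdd_right_eq hf p hb.1
  have := p.min_le_length_of_mem_support (fun g => toAdd g.right)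
    (fun _ _ => abs_toAdd_right_sub_le_one) hu hv
  simp only [hua, hvb, SemidirectProduct.one_right, toAdd_one, sub_zero, toAdd_ofAdd] at this
  have : a ≤ 0 ∧ a ≤ z := ⟨ha.2 (by simp), ha.2 (by simp)⟩
  have : 0 ≤ b ∧ z ≤ b := ⟨hb.2 (by simp), hb.2 (by simp)⟩
  grind

theorem mem_Icc_of_mul_lampAt_inv_apply_ne_one {F : LampGroup MZ L} {a b z t : ℤ}
    (hF : ∀ t, (F : MZ → L) (ofAdd t) ≠ 1 → a ≤ t ∧ t ≤ b)
    (ht : ((F * lampAt (ofAdd z) ((F : MZ → L) (ofAdd z))⁻¹ : LampGroup MZ L) : MZ → L)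
      (ofAdd t) ≠ 1) :
    a ≤ t ∧ t ≤ b ∧ t ≠ z := by
  obtain ⟨htz, hFt⟩ := mul_lampAt_inv_apply_ne_one ht
  exact ⟨(hF t hFt).1, (hF t hFt).2, fun h => htz (by rw [h])⟩

theorem exists_walk_mk_of_exists_walk {F : LampGroup MZ L} {z σ : ℤ} (hσ : σ = 1 ∨ σ = -1)
    (l : L) {n : ℕ}
    (h : ∃ p : (cayley _ (swsw MZ L genZ)).Walk 1 ⟨F * lampAt (ofAdd z) l⁻¹, ofAdd (z - σ)⟩,
      p.length ≤ n) :
    ∃ p : (cayley _ (swsw MZ L genZ)).Walk 1 ⟨F, ofAdd z⟩, p.length ≤ n + 1 := by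
  have hσ' : ofAdd σ ∈ genZ := by rcases hσ with rfl | rfl <;> simp [genZ]
  have heq : (⟨F * lampAt (ofAdd z) l⁻¹, ofAdd (z - σ)⟩ : Wreath MZ L)
      * switchWalkSwitch 1 (ofAdd σ) l = ⟨F, ofAdd z⟩ := by
    rw [mul_switchWalkSwitch]
    dsimp only
    rw [← ofAdd_add, sub_add_cancel, lampAt_one, mul_one, mul_assoc, lampAt_mul, inv_mul_cancel,
      lampAt_one, mul_one]
  exact heq ▸ exists_walk_mul_length_le (switchWalkSwitch_mem_swsw hσ' 1 l)
    (switchWalkSwitch_ne_one (ne_of_mem_of_not_mem hσ' one_notMem_genZ) 1 l) h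

theorem cayley_swsw_adj_one_mk {F : LampGroup MZ L} {z : ℤ} (hz : z = 1 ∨ z = -1)
    (hF : ∀ t, (F : MZ → L) (ofAdd t) ≠ 1 → t = 0 ∨ t = z) :
    (cayley _ (swsw MZ L genZ)).Adj 1 ⟨F, ofAdd z⟩ := by
  have hz' : ofAdd z ∈ genZ := by rcases hz with rfl | rfl <;> simp [genZ]
  have hz₁ : ofAdd z ≠ 1 := ne_of_mem_of_not_mem hz' one_notMem_genZ
  have heq : (⟨F, ofAdd z⟩ : Wreath MZ L)
      = 1 * switchWalkSwitch ((F : MZ → L) 1) (ofAdd z) ((F : MZ → L) (ofAdd z)) := by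
    rw [mul_switchWalkSwitch]
    simp only [SemidirectProduct.one_left, SemidirectProduct.one_right, one_mul]
    rw [← eq_lampAt_mul_lampAt hz₁.symm fun x hx => ?_]
    rcases hF (toAdd x) hx with h | h
    · exact Or.inl (by rw [← ofAdd_toAdd x, h, ofAdd_zero])
    · exact Or.inr (by rw [← ofAdd_toAdd x, h])
  rw [heq]
  exact cayley_adj_mul (switchWalkSwitch_mem_swsw hz' _ _) (switchWalkSwitch_ne_one hz₁ _ _)

theorem exists_walk_length_le_of_bounds (n : ℕ) {a b z : ℤ} {F : LampGroup MZ L}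
    (ha : a ≤ 0) (hb : 0 ≤ b) (haz : a ≤ z) (hzb : z ≤ b)
    (hF : ∀ t, (F : MZ → L) (ofAdd t) ≠ 1 → a ≤ t ∧ t ≤ b) (hn : 2 * b - 2 * a - |z| = n + 1) :
    ∃ p : (cayley _ (swsw MZ L genZ)).Walk 1 ⟨F, ofAdd z⟩, p.length ≤ n + 1 := by
  -- Peel off the last generator: the walk ends by stepping towards `0` inside `[a, b]`, or,
  -- when the cursor sits at an extreme end of `[a, b]`, by setting the lamp there.
  induction n generalizing a b z F with
  | zero =>
    have hz : z = 1 ∨ z = -1 := by grind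
    refine ⟨(cayley_swsw_adj_one_mk hz fun t ht => ?_).toWalk, by simp⟩
    have := hF t ht
    grind
  | succ n ih =>
    by_cases hup : 0 ≤ z ∧ z < b
    · exact exists_walk_mk_of_exists_walk (σ := -1) (by simp) 1
        (by
          rw [inv_one, lampAt_one, mul_one, sub_neg_eq_add]
          exact ih ha hb (by omega) (by omega) hF (by grind))
    by_cases hdown : a < z ∧ z ≤ 0
    · exact exists_walk_mk_of_exists_walk (σ := 1) (by simp) 1
        (by
          rw [inv_one, lampAt_one, mul_one]
          exact ih ha hb (by omega) (by omega) hF (by grind))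
    by_cases hpos : 0 < z
    · obtain rfl : z = b := by omega
      refine exists_walk_mk_of_exists_walk (σ := 1) (by simp) ((F : MZ → L) (ofAdd z))
        (ih (b := z - 1) (z := z - 1) ha (by omega) (by omega) le_rfl (fun t ht => ?_) (by grind))
      have := mem_Icc_of_mul_lampAt_inv_apply_ne_one hF ht
      omega
    · obtain ⟨rfl, hz⟩ : z = a ∧ z < 0 := by grind
      refine exists_walk_mk_of_exists_walk (σ := -1) (by simp) ((F : MZ → L) (ofAdd z))
        (ih (a := z + 1) (z := z + 1) (by omega) hb (by omega) (by omega) (fun t ht => ?_)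
          (by grind))
      have := mem_Icc_of_mul_lampAt_inv_apply_ne_one hF ht
      omega

theorem exists_walk_length_le {a b z : ℤ} {F : LampGroup MZ L}
    (ha : a ≤ 0) (hb : 0 ≤ b) (haz : a ≤ z) (hzb : z ≤ b)
    (hF : ∀ t, (F : MZ → L) (ofAdd t) ≠ 1 → a ≤ t ∧ t ≤ b) (hab : 1 ≤ b - a) :
    ∃ p : (cayley _ (swsw MZ L genZ)).Walk 1 ⟨F, ofAdd z⟩,
      (p.length : ℤ) ≤ 2 * b - 2 * a - |z| := by
  obtain ⟨n, hn⟩ : ∃ n : ℕ, 2 * b - 2 * a - |z| = n + 1 :=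
    ⟨(2 * b - 2 * a - |z| - 1).toNat, by grind⟩
  obtain ⟨p, hp⟩ := exists_walk_length_le_of_bounds n ha hb haz hzb hF hn
  exact ⟨p, by rw [hn]; exact_mod_cast hp⟩

end Lamplighter

theorem stmt_3_general {L : Type*} [Group L]
    (z : ℤ) (f : MZ → L) (hf : f ∈ LampGroup MZ L) (a b : ℤ)
    (ha : IsLeast ({t : ℤ | f (Multiplicative.ofAdd t) ≠ 1} ∪ {0, z}) a)
    (hb : IsGreatest ({t : ℤ | f (Multiplicative.ofAdd t) ≠ 1} ∪ {0, z}) b)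
    (hg : ¬ ∃ s : L, (⟨⟨f, hf⟩, Multiplicative.ofAdd z⟩ : Wreath MZ L) = lampElt MZ L s) :
    (wlen (swsw MZ L genZ) (⟨⟨f, hf⟩, Multiplicative.ofAdd z⟩ : Wreath MZ L) : ℤ)
      = 2 * b + 2 * |a| - |z| := by
  have ha₀ : a ≤ 0 := ha.2 (by simp)
  have haz : a ≤ z := ha.2 (by simp)
  have hb₀ : 0 ≤ b := hb.2 (by simp)
  have hzb : z ≤ b := hb.2 (by simp)
  have hF : ∀ t, f (Multiplicative.ofAdd t) ≠ 1 → a ≤ t ∧ t ≤ b :=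
    fun t ht => ⟨ha.2 (Or.inl ht), hb.2 (Or.inl ht)⟩
  have hab : 1 ≤ b - a := by
    by_contra! h
    obtain rfl : z = 0 := by omega
    refine hg ⟨f 1, ofAdd_zero (α := ℤ) ▸ mk_one_eq_lampElt hf fun x hx => ?_⟩
    have := hF x.toAdd hx
    rw [← ofAdd_toAdd x, show x.toAdd = 0 by omega, ofAdd_zero]
  obtain ⟨p, hp⟩ := exists_walk_length_le (F := ⟨f, hf⟩) ha₀ hb₀ haz hzb hF hab
  obtain ⟨q, hq⟩ := SimpleGraph.Reachable.exists_walk_length_eq_dist ⟨p⟩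
  have hlb := le_length_of_isLeast_of_isGreatest hf ha hb q
  have hub := SimpleGraph.dist_le p
  rw [wlen, abs_of_nonpos ha₀]
  omega

/-- In `ℤ ≀ L` with the switch-walk-switch generating set `L{±1}L`,
the word length of `g = (z, f)` not of the form `(0, δ_s)` equals `2b + 2|a| - |z|`,
where `a = min({t | f t ≠ e} ∪ {0,z})` and `b = max({t | f t ≠ e} ∪ {0,z})`. -/
theorem stmt_3 {L : Type*} [Group L] [Finite L]
    (z : ℤ) (f : MZ → L) (hf : f ∈ LampGroup MZ L) (a b : ℤ)
    (ha : IsLeast ({t : ℤ | f (Multiplicative.ofAdd t) ≠ 1} ∪ {0, z}) a)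
    (hb : IsGreatest ({t : ℤ | f (Multiplicative.ofAdd t) ≠ 1} ∪ {0, z}) b)
    (hg : ¬ ∃ s : L, (⟨⟨f, hf⟩, Multiplicative.ofAdd z⟩ : Wreath MZ L) = lampElt MZ L s) :
    (wlen (swsw MZ L genZ) (⟨⟨f, hf⟩, Multiplicative.ofAdd z⟩ : Wreath MZ L) : ℤ)
      = 2 * b + 2 * |a| - |z| :=
  stmt_3_general z f hf a b ha hb hg
end

section
/- Let L be a finite group and consider Z ≀ L with the switch-walk-switch generating set L{±1}L. There exists α < 1 such that for all n, |S(n) \ S(n)^∞| / |S(n)| ≤ α^n; i.e., the proportion of the sphere of radius n lying in dead-end components decays exponentially. -/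
variable {G : Type*} [Group G]

variable (Γ L : Type*) [Group Γ] [Group L]

/-!
Parry's formula gives the word length of `(f, t)` with respect to `L {±1} L` as `2 (P - Q) - |t|`,
where `[Q, P]` is the smallest interval containing `0`, `t` and the lit lamps (the only exceptions
are the elements with a single lamp lit at `0` and the walker at `0`). If the lit lamps on one side
of `0` reach no farther from `0` than `|t|`, the walker can move off to infinity on that side
without this length decreasing, so `g` lies in the infinite component of the complement of
`B(|g| - 1)`. Hence an element of `S(n) \ S(n)^∞` is exceptional or has lit lamps beyond `±|t|` on
both sides; the latter confines its lamps to a window of width `2n/3`, leaving at most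
`O(n²) |L|^(2n/3)` such elements against the `|L|^(n+1)` elements of `S(n)` with lamps lit along
`[0, n]`. For small `n` it suffices that `S(n)^∞` is nonempty.
-/

open Filter Topology

namespace SimpleGraph.Walk

variable {V : Type*} {G : SimpleGraph V} {f : V → ℤ}

lemma abs_sub_le_length_s8 (hf : ∀ u v, G.Adj u v → |f u - f v| ≤ 1) {x y : V} (w : G.Walk x y) :
    |f x - f y| ≤ w.length := by
  induction w with
  | nil => simp
  | @cons x b y h p ih =>
    rw [length_cons, Nat.cast_succ]
    linarith [abs_sub_le (f x) (f b) (f y), hf x b h]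

lemma abs_add_abs_le_length (hf : ∀ u v, G.Adj u v → |f u - f v| ≤ 1) {x y u : V}
    (w : G.Walk x y) (hu : u ∈ w.support) :
    |f x - f u| + |f u - f y| ≤ w.length := by
  classical
  rw [← w.take_spec hu, length_append, Nat.cast_add]
  exact add_le_add ((w.takeUntil u hu).abs_sub_le_length_s8 hf)
    ((w.dropUntil u hu).abs_sub_le_length_s8 hf)

lemma min_le_length_of_mem_support_s8 (hf : ∀ u v, G.Adj u v → |f u - f v| ≤ 1) {x y u v : V}
    (w : G.Walk x y) (hu : u ∈ w.support) (hv : v ∈ w.support) :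
    min (|f x - f u| + |f u - f v| + |f v - f y|) (|f x - f v| + |f v - f u| + |f u - f y|) ≤
      w.length := by
  classical
  rw [← w.take_spec hu, mem_support_append_iff] at hv
  rw [← w.take_spec hu, length_append, Nat.cast_add]
  rcases hv with hv | hv
  · have h₁ := (w.takeUntil u hu).abs_add_abs_le_length hf hv
    have h₂ := (w.dropUntil u hu).abs_sub_le_length_s8 hf
    exact (min_le_right _ _).trans (by linarith)
  · have h₁ := (w.takeUntil u hu).abs_sub_le_length_s8 hf
    have h₂ := (w.dropUntil u hu).abs_add_abs_le_length hf hv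
    exact (min_le_left _ _).trans (by linarith)

end SimpleGraph.Walk

lemma SimpleGraph.exists_walk_length_le_of_exists_adj_lt {V : Type*} {G : SimpleGraph V} {a : V}
    (p : V → Prop) (φ : V → ℕ) (hdesc : ∀ v, p v → v ≠ a → ∃ u, p u ∧ G.Adj u v ∧ φ u < φ v)
    {v : V} (hv : p v) : ∃ w : G.Walk a v, w.length ≤ φ v := by
  induction hφ : φ v using Nat.strong_induction_on generalizing v with
  | _ N ih =>
    by_cases hva : v = a
    · subst hva
      exact ⟨.nil, Nat.zero_le _⟩
    · obtain ⟨u, hu, hadj, hlt⟩ := hdesc v hv hva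
      obtain ⟨w, hw⟩ := ih (φ u) (hφ ▸ hlt) hu rfl
      exact ⟨w.concat hadj, by rw [Walk.length_concat]; omega⟩

lemma mem_infPart_of_ray {G : Type*} [Group G] {S A : Set G} (f : ℕ → G)
    (hf : Function.Injective f) (hA : ∀ k, f k ∈ A)
    (hadj : ∀ k, (cayley G S).Adj (f k) (f (k + 1))) : f 0 ∈ infPart S A := by
  refine ⟨hA 0, Set.infinite_of_injective_forall_mem (f := fun k => (⟨f k, hA k⟩ : A))
    (fun a b hab => hf (congrArg Subtype.val hab)) fun k => ?_⟩
  induction k with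
  | zero => exact .refl _
  | succ k ih => exact ih.trans (SimpleGraph.Adj.reachable (hadj k))

theorem exists_lt_one_forall_le_pow {r : ℕ → ℝ} (hr : ∀ n, r n < 1) {β : ℝ} (hβ₀ : 0 ≤ β)
    (hβ₁ : β < 1) (hev : ∀ᶠ n in atTop, r n ≤ β ^ n) : ∃ α < 1, ∀ n, r n ≤ α ^ n := by
  obtain ⟨N, hN⟩ := eventually_atTop.mp hev
  have hsmall : ∀ n ∈ Finset.range N, ∀ᶠ α in 𝓝[<] (1 : ℝ), r n < α ^ n := fun n _ =>
    ((continuous_pow n).tendsto' 1 1 (one_pow n)).mono_left nhdsWithin_le_nhds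
      |>.eventually_const_lt (hr n)
  have hlarge : ∀ᶠ α in 𝓝[<] (1 : ℝ), β < α :=
    (continuous_id.tendsto' 1 1 rfl).mono_left nhdsWithin_le_nhds |>.eventually_const_lt hβ₁
  obtain ⟨α, hα₁, hαβ, hα⟩ := ((eventually_mem_nhdsWithin (a := (1 : ℝ)) (s := Set.Iio 1)).and
    (hlarge.and ((eventually_all_finset _).mpr hsmall))).exists
  refine ⟨α, hα₁, fun n => ?_⟩
  rcases lt_or_ge n N with hn | hn
  · exact (hα n (Finset.mem_range.mpr hn)).le
  · exact (hN n hn).trans (pow_le_pow_left₀ hβ₀ hαβ.le n)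

lemma eventually_sq_mul_pow_le :
    ∀ᶠ n : ℕ in atTop, (2 * n + 2 : ℝ) ^ 2 * (4 / 5) ^ n ≤ (9 / 10) ^ n := by
  have hlim := (tendsto_pow_const_mul_const_pow_of_abs_lt_one 2 (r := 8 / 9)
    (by rw [abs_of_pos (by norm_num)]; norm_num)).eventually_lt_const (u := 1 / 16) (by norm_num)
  filter_upwards [hlim, eventually_ge_atTop 1] with n hn hn₁
  have h₁ : (1 : ℝ) ≤ n := by exact_mod_cast hn₁
  have hq : (0 : ℝ) ≤ (8 / 9) ^ n := by positivity
  calc (2 * n + 2 : ℝ) ^ 2 * (4 / 5) ^ n = (2 * n + 2) ^ 2 * (8 / 9) ^ n * (9 / 10) ^ n := by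
        rw [mul_assoc, ← mul_pow]; norm_num
    _ ≤ 1 * (9 / 10) ^ n := by gcongr; nlinarith
    _ = (9 / 10) ^ n := one_mul _

namespace WreathZ

open Multiplicative SimpleGraph

noncomputable section

variable {L : Type*} [Group L]

abbrev gens (L : Type*) [Group L] : Set (Wreath MZ L) := swsw MZ L genZ

abbrev Cay (L : Type*) [Group L] : SimpleGraph (Wreath MZ L) := cayley (Wreath MZ L) (gens L)

def pos (g : Wreath MZ L) : ℤ := toAdd g.right

def lamp (g : Wreath MZ L) (z : ℤ) : L := (g.left : MZ → L) (ofAdd z)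

@[simp] lemma pos_one : pos (1 : Wreath MZ L) = 0 := rfl

lemma ext_pos_lamp {g h : Wreath MZ L} (hp : pos g = pos h) (hl : ∀ z, lamp g z = lamp h z) :
    g = h :=
  SemidirectProduct.ext (Subtype.ext (funext fun x => hl (toAdd x))) hp

lemma finite_mulSupport_lamp (g : Wreath MZ L) : (Function.mulSupport (lamp g)).Finite :=
  g.left.2.preimage (ofAdd.injective.injOn)

def withPos (g : Wreath MZ L) (t : ℤ) : Wreath MZ L := ⟨g.left, ofAdd t⟩

@[simp] lemma pos_withPos (g : Wreath MZ L) (t : ℤ) : pos (withPos g t) = t := rfl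

def lampSupport (g : Wreath MZ L) : Finset ℤ := (finite_mulSupport_lamp g).toFinset

lemma mem_lampSupport {g : Wreath MZ L} {z : ℤ} : z ∈ lampSupport g ↔ lamp g z ≠ 1 := by
  simp [lampSupport]

def lampMax (g : Wreath MZ L) : ℤ := (insert 0 (lampSupport g)).max' (Finset.insert_nonempty _ _)

def lampMin (g : Wreath MZ L) : ℤ := (insert 0 (lampSupport g)).min' (Finset.insert_nonempty _ _)

lemma lampMax_nonneg (g : Wreath MZ L) : 0 ≤ lampMax g :=
  Finset.le_max' _ 0 (Finset.mem_insert_self _ _)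

lemma lampMin_nonpos (g : Wreath MZ L) : lampMin g ≤ 0 :=
  Finset.min'_le _ 0 (Finset.mem_insert_self _ _)

lemma le_lampMax {g : Wreath MZ L} {z : ℤ} (h : lamp g z ≠ 1) : z ≤ lampMax g :=
  Finset.le_max' _ z (Finset.mem_insert_of_mem (mem_lampSupport.mpr h))

lemma lampMin_le {g : Wreath MZ L} {z : ℤ} (h : lamp g z ≠ 1) : lampMin g ≤ z :=
  Finset.min'_le _ z (Finset.mem_insert_of_mem (mem_lampSupport.mpr h))

lemma lamp_eq_one_of_lampMax_lt {g : Wreath MZ L} {z : ℤ} (h : lampMax g < z) : lamp g z = 1 :=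
  not_not.mp fun hz => (le_lampMax hz).not_gt h

lemma lamp_eq_one_of_lt_lampMin {g : Wreath MZ L} {z : ℤ} (h : z < lampMin g) : lamp g z = 1 :=
  not_not.mp fun hz => (lampMin_le hz).not_gt h

lemma lampMax_le {g : Wreath MZ L} {c : ℤ} (h₀ : 0 ≤ c) (hl : ∀ z, c < z → lamp g z = 1) :
    lampMax g ≤ c := by
  refine Finset.max'_le _ _ _ fun z hz => ?_
  rcases Finset.mem_insert.mp hz with rfl | hz
  · exact h₀
  · exact not_lt.mp fun hcz => mem_lampSupport.mp hz (hl z hcz)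

lemma le_lampMin {g : Wreath MZ L} {c : ℤ} (h₀ : c ≤ 0) (hl : ∀ z, z < c → lamp g z = 1) :
    c ≤ lampMin g := by
  refine Finset.le_min' _ _ _ fun z hz => ?_
  rcases Finset.mem_insert.mp hz with rfl | hz
  · exact h₀
  · exact not_lt.mp fun hcz => mem_lampSupport.mp hz (hl z hcz)

lemma lampMax_eq_zero_or (g : Wreath MZ L) : lampMax g = 0 ∨ lamp g (lampMax g) ≠ 1 := by
  simpa [lampMax, mem_lampSupport] using
    Finset.max'_mem (insert 0 (lampSupport g)) (Finset.insert_nonempty _ _)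

lemma lampMin_eq_zero_or (g : Wreath MZ L) : lampMin g = 0 ∨ lamp g (lampMin g) ≠ 1 := by
  simpa [lampMin, mem_lampSupport] using
    Finset.min'_mem (insert 0 (lampSupport g)) (Finset.insert_nonempty _ _)

lemma eq_one_of_lampMax_eq_zero {g : Wreath MZ L} (hp : pos g = 0) (hmax : lampMax g = 0)
    (hmin : lampMin g = 0) (h₀ : lamp g 0 = 1) : g = 1 := by
  refine ext_pos_lamp hp fun z => ?_
  rcases lt_trichotomy z 0 with hz | rfl | hz
  · exact lamp_eq_one_of_lt_lampMin (hmin ▸ hz)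
  · exact h₀
  · exact lamp_eq_one_of_lampMax_lt (hmax ▸ hz)

/-- Parry's formula: a geodesic from `1` to `g` must visit both ends of the interval spanned by
`0`, `pos g` and the lit lamps, and the cheaper of the two tours is this long. -/
def lengthFormula (g : Wreath MZ L) : ℤ :=
  2 * (max (lampMax g) (pos g) - min (lampMin g) (pos g)) - |pos g|

lemma lengthFormula_nonneg (g : Wreath MZ L) : 0 ≤ lengthFormula g := by
  have := lampMax_nonneg g
  have := lampMin_nonpos g
  simp only [lengthFormula, abs_eq_max_neg]
  omega

/-- Only the elements `(δ_l, 0)` with `l ≠ 1` are not given their word length by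
`lengthFormula` (which is `0` for them, while they have length `2`). -/
def IsExceptional (g : Wreath MZ L) : Prop :=
  pos g = 0 ∧ lampMax g = 0 ∧ lampMin g = 0 ∧ lamp g 0 ≠ 1

lemma lengthFormula_of_isExceptional {g : Wreath MZ L} (h : IsExceptional g) :
    lengthFormula g = 0 := by
  simp [lengthFormula, h.1, h.2.1, h.2.2.1]

def step (l : L) (ε : ℤ) (l' : L) : Wreath MZ L :=
  lampElt MZ L l * baseElt MZ L (ofAdd ε) * lampElt MZ L l'

lemma lampElt_left_apply (l : L) (x : MZ) :
    ((lampElt MZ L l).left : MZ → L) x = if x = 1 then l else 1 := by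
  unfold lampElt
  split_ifs with h <;> simp [h]

lemma shiftHom_apply_apply (γ : MZ) (f : LampGroup MZ L) (x : MZ) :
    ((shiftHom MZ L γ f : LampGroup MZ L) : MZ → L) x = (f : MZ → L) (γ⁻¹ * x) := rfl

lemma step_left_apply (l : L) (ε : ℤ) (l' : L) (x : MZ) :
    ((step l ε l').left : MZ → L) x =
      (if x = 1 then l else 1) * (if x = ofAdd ε then l' else 1) := by
  have hx : (ofAdd ε)⁻¹ * x = 1 ↔ x = ofAdd ε := by rw [inv_mul_eq_one, eq_comm]
  have hl : (lampElt MZ L l).right = 1 := rfl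
  simp only [step, SemidirectProduct.mul_left, SemidirectProduct.mul_right, Subgroup.coe_mul,
    Pi.mul_apply, lampElt_left_apply, hl, map_one, baseElt, shiftHom_apply_apply, one_mul,
    mul_one, hx]

lemma pos_mul_step (g : Wreath MZ L) (l : L) (ε : ℤ) (l' : L) :
    pos (g * step l ε l') = pos g + ε := by
  simp [pos, step, lampElt, baseElt]

lemma lamp_mul_step (g : Wreath MZ L) (l : L) (ε : ℤ) (l' : L) (z : ℤ) :
    lamp (g * step l ε l') z =
      lamp g z * ((if z = pos g then l else 1) * (if z = pos g + ε then l' else 1)) := by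
  have h₁ : g.right⁻¹ * ofAdd z = 1 ↔ z = pos g := by
    rw [inv_mul_eq_one, eq_comm, ← toAdd.injective.eq_iff]; rfl
  have h₂ : g.right⁻¹ * ofAdd z = ofAdd ε ↔ z = pos g + ε := by
    rw [inv_mul_eq_iff_eq_mul, ← toAdd.injective.eq_iff]; simp [pos]
  simp only [lamp, SemidirectProduct.mul_left, Subgroup.coe_mul, Pi.mul_apply,
    shiftHom_apply_apply, step_left_apply, h₁, h₂]

lemma step_mem_gens (l : L) {ε : ℤ} (hε : |ε| = 1) (l' : L) : step l ε l' ∈ gens L := by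
  refine ⟨l, l', ofAdd ε, ?_, rfl⟩
  rcases abs_eq (zero_le_one' ℤ) |>.mp hε with rfl | rfl
  · exact Or.inl rfl
  · exact Or.inr rfl

lemma exists_step_of_mem_gens {s : Wreath MZ L} (hs : s ∈ gens L) :
    ∃ l l' ε, |ε| = 1 ∧ s = step l ε l' := by
  obtain ⟨l, l', γ, hγ, rfl⟩ := hs
  exact ⟨l, l', toAdd γ, by rcases hγ with rfl | rfl <;> rfl, rfl⟩

lemma pos_lamp_mul_step (g : Wreath MZ L) (l : L) {ε : ℤ} (hε : |ε| = 1) (l' : L) :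
    |pos g - pos (g * step l ε l')| = 1 ∧
      ∀ z, z ≠ pos g → z ≠ pos (g * step l ε l') → lamp (g * step l ε l') z = lamp g z := by
  rw [pos_mul_step]
  refine ⟨by rwa [sub_add_cancel_left, abs_neg], fun z h₁ h₂ => ?_⟩
  simp [lamp_mul_step, h₁, h₂]

theorem adj_iff {g h : Wreath MZ L} :
    (Cay L).Adj g h ↔
      |pos g - pos h| = 1 ∧ ∀ z, z ≠ pos g → z ≠ pos h → lamp h z = lamp g z := by
  constructor
  · rintro ⟨-, hs | hs⟩ <;> obtain ⟨l, l', ε, hε, hs⟩ := exists_step_of_mem_gens hs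
    · rw [← mul_inv_cancel_left g h, hs]
      exact pos_lamp_mul_step g l hε l'
    · rw [← mul_inv_cancel_left h g, hs, abs_sub_comm]
      obtain ⟨h₁, h₂⟩ := pos_lamp_mul_step h l hε l'
      exact ⟨h₁, fun z hz hz' => (h₂ z hz' hz).symm⟩
  · rintro ⟨hpos, hlamp⟩
    have hstep : g⁻¹ * h = step ((lamp g (pos g))⁻¹ * lamp h (pos g)) (pos h - pos g)
        ((lamp g (pos h))⁻¹ * lamp h (pos h)) := by
      rw [inv_mul_eq_iff_eq_mul]
      refine ext_pos_lamp (by rw [pos_mul_step]; ring) fun z => ?_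
      rw [lamp_mul_step, add_sub_cancel]
      by_cases hz : z = pos g
      · subst hz
        have : pos g ≠ pos h := fun he => by simp [he] at hpos
        simp [this]
      · by_cases hz' : z = pos h
        · subst hz'; simp [hz]
        · simp [hz, hz', hlamp z hz hz']
    refine ⟨fun he => by simp [he] at hpos, Or.inl ?_⟩
    rw [hstep]
    exact step_mem_gens _ (by rwa [abs_sub_comm]) _

lemma adj_mul_step (g : Wreath MZ L) (l : L) {ε : ℤ} (hε : |ε| = 1) (l' : L) :
    (Cay L).Adj g (g * step l ε l') :=
  adj_iff.mpr (pos_lamp_mul_step g l hε l')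

lemma adj_withPos (g : Wreath MZ L) {ε : ℤ} (hε : |ε| = 1) :
    (Cay L).Adj g (withPos g (pos g + ε)) :=
  adj_iff.mpr ⟨by rwa [pos_withPos, sub_add_cancel_left, abs_neg], fun _ _ _ => rfl⟩

lemma lampMax_withPos (g : Wreath MZ L) (t : ℤ) : lampMax (withPos g t) = lampMax g := rfl

lemma lampMin_withPos (g : Wreath MZ L) (t : ℤ) : lampMin (withPos g t) = lampMin g := rfl

def retreat (g : Wreath MZ L) (ε : ℤ) : Wreath MZ L :=
  g * step (lamp g (pos g))⁻¹ ε (lamp g (pos g + ε))⁻¹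

lemma pos_retreat (g : Wreath MZ L) (ε : ℤ) : pos (retreat g ε) = pos g + ε :=
  pos_mul_step _ _ _ _

lemma lamp_retreat {g : Wreath MZ L} {ε : ℤ} (hε : ε ≠ 0) (z : ℤ) :
    lamp (retreat g ε) z = if z = pos g ∨ z = pos g + ε then 1 else lamp g z := by
  rw [retreat, lamp_mul_step]
  by_cases h₁ : z = pos g
  · subst h₁; simp [hε]
  · by_cases h₂ : z = pos g + ε
    · subst h₂; simp [hε]
    · simp [h₁, h₂]

lemma lampMax_retreat_le {g : Wreath MZ L} (hpos : 0 < pos g) (hmax : lampMax g ≤ pos g) :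
    lampMax (retreat g (-1)) ≤ pos g - 1 := by
  refine lampMax_le (by omega) fun z hz => ?_
  rw [lamp_retreat (by norm_num)]
  split_ifs
  · rfl
  · exact lamp_eq_one_of_lampMax_lt (by omega)

lemma lampMin_le_lampMin_retreat (g : Wreath MZ L) {ε : ℤ} (hε : ε ≠ 0) :
    lampMin g ≤ lampMin (retreat g ε) := by
  refine le_lampMin (lampMin_nonpos g) fun z hz => ?_
  rw [lamp_retreat hε]
  split_ifs
  · rfl
  · exact lamp_eq_one_of_lt_lampMin hz

lemma le_lampMin_retreat {g : Wreath MZ L} (hpos : pos g < 0) (hmin : pos g ≤ lampMin g) :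
    pos g + 1 ≤ lampMin (retreat g 1) := by
  refine le_lampMin (by omega) fun z hz => ?_
  rw [lamp_retreat one_ne_zero]
  split_ifs
  · rfl
  · exact lamp_eq_one_of_lt_lampMin (by omega)

lemma lampMax_retreat_le_lampMax (g : Wreath MZ L) {ε : ℤ} (hε : ε ≠ 0) :
    lampMax (retreat g ε) ≤ lampMax g := by
  refine lampMax_le (lampMax_nonneg g) fun z hz => ?_
  rw [lamp_retreat hε]
  split_ifs
  · rfl
  · exact lamp_eq_one_of_lampMax_lt hz

lemma not_isExceptional_of_pos_ne_zero {g : Wreath MZ L} (h : pos g ≠ 0) : ¬ IsExceptional g :=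
  fun hg => h hg.1

/-- If lit lamps lie beyond the walker, away from `0`, a geodesic reaches `g` coming back from
them; otherwise it arrives from the side of `0`, and its last step may have switched both lamps
it touched. -/
theorem exists_adj_lengthFormula_lt {g : Wreath MZ L} (hg : ¬ IsExceptional g) (hg₁ : g ≠ 1) :
    ∃ h, ¬ IsExceptional h ∧ (Cay L).Adj h g ∧ lengthFormula h < lengthFormula g := by
  have hM := lampMax_nonneg g
  have hm := lampMin_nonpos g
  by_cases hA : 0 ≤ pos g ∧ pos g < lampMax g
  · refine ⟨withPos g (pos g + 1), not_isExceptional_of_pos_ne_zero (by simp; omega),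
      (adj_withPos g (by simp)).symm, ?_⟩
    simp only [lengthFormula, pos_withPos, lampMax_withPos, lampMin_withPos, abs_eq_max_neg]
    omega
  by_cases hB : pos g ≤ 0 ∧ lampMin g < pos g
  · refine ⟨withPos g (pos g + -1), not_isExceptional_of_pos_ne_zero (by simp; omega),
      (adj_withPos g (by simp)).symm, ?_⟩
    simp only [lengthFormula, pos_withPos, lampMax_withPos, lampMin_withPos, abs_eq_max_neg]
    omega
  by_cases hC : 0 < pos g
  · have h₁ := lampMax_retreat_le hC (by omega)
    have h₂ := lampMin_le_lampMin_retreat g (by norm_num : (-1 : ℤ) ≠ 0)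
    refine ⟨retreat g (-1), fun he => ?_, (adj_mul_step g _ (by simp) _).symm, ?_⟩
    · have h₀ : pos g + -1 = 0 := by rw [← pos_retreat, he.1]
      exact he.2.2.2 (by rw [lamp_retreat (by norm_num)]; simp [h₀])
    · simp only [lengthFormula, pos_retreat, abs_eq_max_neg]
      omega
  by_cases hD : pos g < 0
  · have h₁ := le_lampMin_retreat hD (by omega)
    have h₂ := lampMax_retreat_le_lampMax g one_ne_zero
    refine ⟨retreat g 1, fun he => ?_, (adj_mul_step g _ (by simp) _).symm, ?_⟩
    · have h₀ : pos g + 1 = 0 := by rw [← pos_retreat, he.1]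
      exact he.2.2.2 (by rw [lamp_retreat one_ne_zero]; simp [h₀])
    · simp only [lengthFormula, pos_retreat, abs_eq_max_neg]
      omega
  exact absurd (eq_one_of_lampMax_eq_zero (by omega) (by omega) (by omega)
    (not_not.mp fun h => hg ⟨by omega, by omega, by omega, h⟩)) hg₁

lemma exists_mem_support_pos_eq_of_lamp_ne {x y : Wreath MZ L} (w : (Cay L).Walk x y) {z : ℤ}
    (hz : lamp x z ≠ lamp y z) : ∃ v ∈ w.support, pos v = z := by
  induction w with
  | nil => exact absurd rfl hz
  | @cons x b y hadj p ih =>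
    by_cases hb : lamp b z = lamp x z
    · obtain ⟨v, hv, rfl⟩ := ih (hb ▸ hz)
      exact ⟨v, List.mem_cons_of_mem _ hv, rfl⟩
    · by_cases hx : z = pos x
      · exact ⟨x, (Walk.cons hadj p).start_mem_support, hx.symm⟩
      · by_cases hb' : z = pos b
        · exact ⟨b, List.mem_cons_of_mem _ p.start_mem_support, hb'.symm⟩
        · exact absurd ((adj_iff.mp hadj).2 z hx hb') hb

lemma exists_mem_support_pos_eq {g : Wreath MZ L} (w : (Cay L).Walk 1 g) {z : ℤ}
    (hz : z = 0 ∨ z = pos g ∨ lamp g z ≠ 1) : ∃ v ∈ w.support, pos v = z := by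
  rcases hz with rfl | rfl | hz
  · exact ⟨1, w.start_mem_support, rfl⟩
  · exact ⟨g, w.end_mem_support, rfl⟩
  · exact exists_mem_support_pos_eq_of_lamp_ne w (Ne.symm hz)

theorem lengthFormula_le_length {g : Wreath MZ L} (w : (Cay L).Walk 1 g) :
    lengthFormula g ≤ w.length := by
  have hf : ∀ u v, (Cay L).Adj u v → |pos u - pos v| ≤ 1 := fun u v h => (adj_iff.mp h).1.le
  obtain ⟨u, hu, hpu⟩ := exists_mem_support_pos_eq w (z := max (lampMax g) (pos g)) <| by
    rcases max_choice (lampMax g) (pos g) with h | h <;> rw [h]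
    · exact (lampMax_eq_zero_or g).imp_right Or.inr
    · exact Or.inr (Or.inl rfl)
  obtain ⟨v, hv, hpv⟩ := exists_mem_support_pos_eq w (z := min (lampMin g) (pos g)) <| by
    rcases min_choice (lampMin g) (pos g) with h | h <;> rw [h]
    · exact (lampMin_eq_zero_or g).imp_right Or.inr
    · exact Or.inr (Or.inl rfl)
  have := w.min_le_length_of_mem_support_s8 hf hu hv
  have := lampMax_nonneg g
  have := lampMin_nonpos g
  rw [hpu, hpv, pos_one] at *
  simp only [lengthFormula, abs_eq_max_neg] at *
  omega

theorem exists_walk_length_le_lengthFormula {g : Wreath MZ L} (hg : ¬ IsExceptional g) :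
    ∃ w : (Cay L).Walk 1 g, w.length ≤ (lengthFormula g).toNat := by
  refine exists_walk_length_le_of_exists_adj_lt (fun g => ¬ IsExceptional g)
    (fun g => (lengthFormula g).toNat) (fun v hv hv₁ => ?_) hg
  obtain ⟨u, hu, hadj, hlt⟩ := exists_adj_lengthFormula_lt hv hv₁
  exact ⟨u, hu, hadj, by have := lengthFormula_nonneg u; omega⟩

theorem wlen_eq_lengthFormula {g : Wreath MZ L} (hg : ¬ IsExceptional g) :
    (wlen (gens L) g : ℤ) = lengthFormula g := by
  obtain ⟨w, hw⟩ := exists_walk_length_le_lengthFormula hg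
  obtain ⟨w', hw'⟩ := Reachable.exists_walk_length_eq_dist ⟨w⟩
  have h₁ := lengthFormula_le_length w'
  have h₂ := dist_le w
  have h₃ := lengthFormula_nonneg g
  rw [wlen, ← hw']
  omega

theorem lengthFormula_le_wlen (g : Wreath MZ L) : lengthFormula g ≤ wlen (gens L) g := by
  by_cases hg : IsExceptional g
  · rw [lengthFormula_of_isExceptional hg]
    positivity
  · exact (wlen_eq_lengthFormula hg).ge

lemma withPos_pos (g : Wreath MZ L) : withPos g (pos g) = g := ext_pos_lamp rfl fun _ => rfl

lemma withPos_withPos (g : Wreath MZ L) (s t : ℤ) : withPos (withPos g s) t = withPos g t := rfl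

lemma mem_infPart_of_forall_le_lengthFormula {g : Wreath MZ L} (hg : ¬ IsExceptional g)
    {σ : ℤ} (hσ : |σ| = 1)
    (hray : ∀ k : ℕ, lengthFormula g ≤ lengthFormula (withPos g (pos g + σ * k))) :
    g ∈ infPart (gens L) {x | wlen (gens L) g ≤ wlen (gens L) x} := by
  have hσ₀ : σ ≠ 0 := by rintro rfl; simp at hσ
  have := mem_infPart_of_ray (S := gens L) (A := {x | wlen (gens L) g ≤ wlen (gens L) x})
    (fun k : ℕ => withPos g (pos g + σ * k))
    (fun a b hab => by simpa [hσ₀] using congrArg pos hab)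
    (fun k => by
      have := (wlen_eq_lengthFormula hg).trans_le ((hray k).trans (lengthFormula_le_wlen _))
      exact_mod_cast this)
    (fun k => by
      simpa only [withPos_withPos, pos_withPos, Nat.cast_succ, mul_add_one, add_assoc]
        using adj_withPos (withPos g (pos g + σ * k)) hσ)
  simpa [withPos_pos] using this

def IsTrapped (g : Wreath MZ L) : Prop := |pos g| < lampMax g ∧ |pos g| < -lampMin g

theorem mem_infPart_of_not_isTrapped {g : Wreath MZ L} (hg : ¬ IsExceptional g)
    (ht : ¬ IsTrapped g) : g ∈ infPart (gens L) {x | wlen (gens L) g ≤ wlen (gens L) x} := by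
  have hM := lampMax_nonneg g
  have hm := lampMin_nonpos g
  unfold IsTrapped at ht
  by_cases hright : lampMin g ≤ pos g ∧ lampMax g ≤ |pos g|
  · refine mem_infPart_of_forall_le_lengthFormula hg (σ := 1) (by simp) fun k => ?_
    have := k.cast_nonneg (α := ℤ)
    simp only [lengthFormula, pos_withPos, lampMax_withPos, lampMin_withPos, abs_eq_max_neg] at *
    omega
  · refine mem_infPart_of_forall_le_lengthFormula hg (σ := -1) (by simp) fun k => ?_
    have := k.cast_nonneg (α := ℤ)
    simp only [lengthFormula, pos_withPos, lampMax_withPos, lampMin_withPos, abs_eq_max_neg] at *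
    omega

/-- `S(n) \ S(n)^∞`. -/
def sphereFinPart (L : Type*) [Group L] (n : ℕ) : Set (Wreath MZ L) :=
  wSphere (gens L) n \ sphereInf (gens L) n 0

theorem isExceptional_or_isTrapped_of_mem_sphereFinPart {n : ℕ} {g : Wreath MZ L}
    (hg : g ∈ sphereFinPart L n) : IsExceptional g ∨ IsTrapped g := by
  obtain ⟨hgn, hg⟩ := hg
  by_contra! h
  refine hg ⟨⟨hgn.ge, hgn.le⟩, ?_⟩
  have := mem_infPart_of_not_isTrapped h.1 h.2
  rwa [show wlen (gens L) g = n from hgn] at this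

lemma exists_injective_window {s : Set (Wreath MZ L)} {n W : ℕ}
    (hs : ∀ g ∈ s, |pos g| ≤ n ∧ -(n : ℤ) ≤ lampMin g ∧ lampMax g - lampMin g ≤ W) :
    ∃ f : s → Finset.Icc (-(n : ℤ)) n × Finset.Icc (-(n : ℤ)) n × (Fin (W + 1) → L),
      Function.Injective f := by
  refine ⟨fun g => (⟨pos g.1, ?_⟩, ⟨lampMin g.1, ?_⟩, fun i => lamp g.1 (lampMin g.1 + i)), ?_⟩
  · have := (hs g g.2).1
    rw [Finset.mem_Icc, ← abs_le]
    exact this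
  · have := (hs g g.2).2.1
    have := lampMin_nonpos g.1
    rw [Finset.mem_Icc]
    omega
  rintro ⟨g, hg⟩ ⟨h, hh⟩ hgh
  simp only [Prod.mk.injEq, Subtype.mk.injEq] at hgh
  obtain ⟨hpos, hmin, hwin⟩ := hgh
  refine Subtype.ext (ext_pos_lamp hpos fun z => ?_)
  change lamp g z = lamp h z
  have hWg := (hs g hg).2.2
  have hWh := (hs h hh).2.2
  by_cases hlow : z < lampMin g
  · rw [lamp_eq_one_of_lt_lampMin hlow, lamp_eq_one_of_lt_lampMin (hmin ▸ hlow)]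
  by_cases hhigh : lampMin g + W < z
  · rw [lamp_eq_one_of_lampMax_lt (by omega), lamp_eq_one_of_lampMax_lt (by omega)]
  have hz : lampMin g + ((z - lampMin g).toNat : ℕ) = z := by omega
  have := congrFun hwin ⟨(z - lampMin g).toNat, by omega⟩
  simp only [← hmin, hz] at this
  exact this

lemma finite_of_window [Finite L] {s : Set (Wreath MZ L)} {n W : ℕ}
    (hs : ∀ g ∈ s, |pos g| ≤ n ∧ -(n : ℤ) ≤ lampMin g ∧ lampMax g - lampMin g ≤ W) :
    s.Finite :=
  let ⟨_, hf⟩ := exists_injective_window hs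
  Set.finite_coe_iff.mp (Finite.of_injective _ hf)

lemma card_le_of_window [Finite L] {s : Set (Wreath MZ L)} {n W : ℕ}
    (hs : ∀ g ∈ s, |pos g| ≤ n ∧ -(n : ℤ) ≤ lampMin g ∧ lampMax g - lampMin g ≤ W) :
    Nat.card s ≤ (2 * n + 1) ^ 2 * Nat.card L ^ (W + 1) := by
  obtain ⟨f, hf⟩ := exists_injective_window hs
  refine (Nat.card_le_card_of_injective f hf).trans_eq ?_
  have hIcc : Nat.card (Finset.Icc (-(n : ℤ)) n) = 2 * n + 1 := by
    rw [Nat.card_eq_finsetCard, Int.card_Icc]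
    omega
  rw [Nat.card_prod, Nat.card_prod, Nat.card_fun, hIcc, Nat.card_eq_fintype_card (α := Fin _),
    Fintype.card_fin]
  ring

lemma window_of_lengthFormula_le {g : Wreath MZ L} {n : ℕ} (h : lengthFormula g ≤ n) :
    |pos g| ≤ n ∧ -(n : ℤ) ≤ lampMin g ∧ lampMax g - lampMin g ≤ n := by
  have := lampMax_nonneg g
  have := lampMin_nonpos g
  simp only [lengthFormula, abs_eq_max_neg] at *
  omega

lemma finite_wSphere [Finite L] (n : ℕ) : (wSphere (gens L) n).Finite :=
  finite_of_window fun g hg => window_of_lengthFormula_le <| by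
    have := lengthFormula_le_wlen g
    rwa [show wlen (gens L) g = n from hg] at this

/-- With `|pos g|` below half of `lampMax g - lampMin g`, the length `n` of `g` is at least
`3/2 (lampMax g - lampMin g)`: the lamps sit in a window of width `2n/3`. -/
lemma card_trapped_le [Finite L] (n : ℕ) :
    Nat.card {g | g ∈ wSphere (gens L) n ∧ IsTrapped g} ≤
      (2 * n + 1) ^ 2 * Nat.card L ^ (2 * n / 3 + 1) := by
  refine card_le_of_window fun g ⟨hgn, htr⟩ => ?_
  have hlen := lengthFormula_le_wlen g
  rw [show wlen (gens L) g = n from hgn] at hlen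
  have := window_of_lengthFormula_le hlen
  unfold IsTrapped at htr
  simp only [lengthFormula, abs_eq_max_neg] at *
  omega

lemma card_isExceptional_le [Finite L] (s : Set (Wreath MZ L)) :
    Nat.card {g | g ∈ s ∧ IsExceptional g} ≤ Nat.card L :=
  Nat.card_le_card_of_injective (fun g => lamp g.1 0) fun ⟨g, _, hg⟩ ⟨h, _, hh⟩ hgh =>
    Subtype.ext <| ext_pos_lamp (hg.1.trans hh.1.symm) fun z => by
      rcases lt_trichotomy z 0 with hz | rfl | hz
      · rw [lamp_eq_one_of_lt_lampMin (hg.2.2.1 ▸ hz),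
          lamp_eq_one_of_lt_lampMin (hh.2.2.1 ▸ hz)]
      · exact hgh
      · rw [lamp_eq_one_of_lampMax_lt (hg.2.1 ▸ hz), lamp_eq_one_of_lampMax_lt (hh.2.1 ▸ hz)]

theorem card_sphereFinPart_le [Finite L] (n : ℕ) :
    Nat.card (sphereFinPart L n) ≤
      (2 * n + 1) ^ 2 * Nat.card L ^ (2 * n / 3 + 1) + Nat.card L := by
  have hsub : sphereFinPart L n ⊆
      {g | g ∈ wSphere (gens L) n ∧ IsTrapped g} ∪
        {g | g ∈ wSphere (gens L) n ∧ IsExceptional g} :=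
    fun g hg => (isExceptional_or_isTrapped_of_mem_sphereFinPart hg).symm.imp
      (fun h => ⟨hg.1, h⟩) (fun h => ⟨hg.1, h⟩)
  have hfin : ({g | g ∈ wSphere (gens L) n ∧ IsTrapped g} ∪
      {g | g ∈ wSphere (gens L) n ∧ IsExceptional g}).Finite :=
    (finite_wSphere n).subset (Set.union_subset (fun _ hg => hg.1) (fun _ hg => hg.1))
  rw [Nat.card_coe_set_eq]
  refine (Set.ncard_le_ncard hsub hfin).trans ((Set.ncard_union_le _ _).trans ?_)
  rw [← Nat.card_coe_set_eq, ← Nat.card_coe_set_eq]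
  exact add_le_add (card_trapped_le n) (card_isExceptional_le _)

def ofLamps (f : ℤ → L) (hf : (Function.mulSupport f).Finite) (t : ℤ) : Wreath MZ L :=
  ⟨⟨fun x => f (toAdd x), hf.preimage toAdd.injective.injOn⟩, ofAdd t⟩

@[simp] lemma pos_ofLamps (f : ℤ → L) (hf) (t : ℤ) : pos (ofLamps f hf t) = t := rfl

@[simp] lemma lamp_ofLamps (f : ℤ → L) (hf) (t z : ℤ) : lamp (ofLamps f hf t) z = f z := rfl

lemma wlen_ofLamps {f : ℤ → L} (hf : (Function.mulSupport f).Finite) {n : ℕ} (hn : n ≠ 0)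
    (hsupp : ∀ z : ℤ, z < 0 ∨ n < z → f z = 1) : wlen (gens L) (ofLamps f hf n) = n := by
  have hmax : lampMax (ofLamps f hf n) ≤ n :=
    lampMax_le (by positivity) fun z hz => hsupp z (Or.inr hz)
  have hmin : 0 ≤ lampMin (ofLamps f hf n) := le_lampMin le_rfl fun z hz => hsupp z (Or.inl hz)
  have hmin' := lampMin_nonpos (ofLamps f hf n)
  have := wlen_eq_lengthFormula
    (not_isExceptional_of_pos_ne_zero (g := ofLamps f hf n) (by simpa using hn))
  simp only [lengthFormula, pos_ofLamps, abs_eq_max_neg] at this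
  omega

/-- Walking from `0` to `n` while setting every lamp on the way gives `|L|^(n+1)` elements
of `S(n)`. -/
theorem pow_le_card_wSphere [Finite L] {n : ℕ} (hn : n ≠ 0) :
    Nat.card L ^ (n + 1) ≤ Nat.card (wSphere (gens L) n) := by
  classical
  have := (finite_wSphere (L := L) n).to_subtype
  let ext (φ : Finset.Icc (0 : ℤ) n → L) (z : ℤ) : L :=
    if h : z ∈ Finset.Icc (0 : ℤ) n then φ ⟨z, h⟩ else 1
  have hext (φ) : (Function.mulSupport (ext φ)).Finite :=
    (Finset.Icc (0 : ℤ) n).finite_toSet.subset fun z hz => by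
      by_contra h
      exact hz (dif_neg h)
  have hmem (φ) : ofLamps (ext φ) (hext φ) n ∈ wSphere (gens L) n :=
    wlen_ofLamps _ hn fun z hz => dif_neg (by rw [Finset.mem_Icc]; omega)
  have hinj : Function.Injective fun φ => (⟨_, hmem φ⟩ : wSphere (gens L) n) := fun φ ψ h =>
    funext fun i => by
      simpa [ext, Finset.mem_Icc.mp i.2] using congrArg (fun g => lamp g.1 i.1) h
  refine le_of_eq_of_le ?_ (Nat.card_le_card_of_injective _ hinj)
  rw [Nat.card_fun, Nat.card_eq_finsetCard, Int.card_Icc, sub_zero, ← Nat.cast_succ,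
    Int.toNat_natCast]

lemma baseElt_mem_sphereInf (n : ℕ) : baseElt MZ L (ofAdd (n : ℤ)) ∈ sphereInf (gens L) n 0 := by
  have hmax : lampMax (baseElt MZ L (ofAdd (n : ℤ))) = 0 :=
    (lampMax_le le_rfl fun _ _ => rfl).antisymm (lampMax_nonneg _)
  have hmin : lampMin (baseElt MZ L (ofAdd (n : ℤ))) = 0 :=
    (lampMin_nonpos _).antisymm (le_lampMin le_rfl fun _ _ => rfl)
  have hpos : pos (baseElt MZ L (ofAdd (n : ℤ))) = n := rfl
  have hexc : ¬ IsExceptional (baseElt MZ L (ofAdd (n : ℤ))) := fun h => h.2.2.2 rfl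
  have hlen : wlen (gens L) (baseElt MZ L (ofAdd (n : ℤ))) = n := by
    have := wlen_eq_lengthFormula hexc
    simp only [lengthFormula, hmax, hmin, hpos, abs_eq_max_neg] at this
    omega
  refine ⟨⟨hlen.ge, hlen.le⟩, ?_⟩
  have := mem_infPart_of_not_isTrapped hexc fun h => (abs_nonneg _).not_gt (hmax ▸ h.1)
  rwa [hlen] at this

lemma sphereFinPart_ssubset_wSphere (n : ℕ) : sphereFinPart L n ⊂ wSphere (gens L) n := by
  have h := baseElt_mem_sphereInf (L := L) n
  have hmem : baseElt MZ L (ofAdd (n : ℤ)) ∈ wSphere (gens L) n := le_antisymm h.1.2 h.1.1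
  exact Set.sdiff_subset.ssubset_of_not_subset fun hsub => (hsub hmem).2 h

lemma sphereFinPart_eq_empty [Subsingleton L] (n : ℕ) : sphereFinPart L n = ∅ :=
  Set.eq_empty_of_forall_notMem fun g hg =>
    (isExceptional_or_isTrapped_of_mem_sphereFinPart hg).elim
      (fun h => h.2.2.2 (Subsingleton.elim _ _))
      (fun h => (abs_nonneg (pos g)).not_gt
        (h.1.trans_le (lampMax_le le_rfl fun _ _ => Subsingleton.elim _ _)))

theorem card_sphereFinPart_div_lt_one [Finite L] (n : ℕ) :
    (Nat.card (sphereFinPart L n) : ℝ) / Nat.card (wSphere (gens L) n) < 1 := by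
  have h : Nat.card (sphereFinPart L n) < Nat.card (wSphere (gens L) n) := by
    rw [Nat.card_coe_set_eq, Nat.card_coe_set_eq]
    exact Set.ncard_lt_ncard (sphereFinPart_ssubset_wSphere n) (finite_wSphere n)
  rw [div_lt_one (by exact_mod_cast (Nat.zero_le _).trans_lt h)]
  exact_mod_cast h

lemma one_div_pow_le_four_fifths_pow {c : ℝ} (hc : 2 ≤ c) {j n : ℕ} (hj : n ≤ 3 * j) :
    1 / c ^ j ≤ (4 / 5) ^ n :=
  calc 1 / c ^ j ≤ 1 / 2 ^ j := by gcongr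
    _ ≤ ((4 / 5) ^ 3) ^ j := by rw [← one_div_pow]; gcongr; norm_num
    _ = (4 / 5) ^ (3 * j) := by rw [← pow_mul]
    _ ≤ (4 / 5) ^ n := pow_le_pow_of_le_one (by norm_num) (by norm_num) hj

theorem card_sphereFinPart_div_le [Finite L] [Nontrivial L] {n : ℕ} (hn : n ≠ 0) :
    (Nat.card (sphereFinPart L n) : ℝ) / Nat.card (wSphere (gens L) n) ≤
      (2 * n + 2) ^ 2 * (4 / 5) ^ n := by
  obtain ⟨c, hcL⟩ : ∃ c, Nat.card L = c := ⟨_, rfl⟩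
  have hc : 2 ≤ c := hcL ▸ Finite.one_lt_card_iff_nontrivial.mpr ‹_›
  have hD : Nat.card (sphereFinPart L n) ≤ (2 * n + 2) ^ 2 * c ^ (2 * n / 3 + 1) := by
    have hpow := Nat.le_self_pow (by omega : 2 * n / 3 + 1 ≠ 0) c
    have h := card_sphereFinPart_le (L := L) n
    rw [hcL] at h
    calc _ ≤ (2 * n + 1) ^ 2 * c ^ (2 * n / 3 + 1) + c := h
      _ ≤ (2 * n + 1) ^ 2 * c ^ (2 * n / 3 + 1) + (4 * n + 3) * c ^ (2 * n / 3 + 1) := by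
        gcongr; nlinarith
      _ = (2 * n + 2) ^ 2 * c ^ (2 * n / 3 + 1) := by ring
  have hS : c ^ (n + 1) ≤ Nat.card (wSphere (gens L) n) := by
    rw [← hcL]; exact pow_le_card_wSphere hn
  have hcR : (2 : ℝ) ≤ c := by exact_mod_cast hc
  have hsplit : (c : ℝ) ^ (n + 1) = c ^ (2 * n / 3 + 1) * c ^ (n - 2 * n / 3) := by
    rw [← pow_add]; congr 1; omega
  calc (Nat.card (sphereFinPart L n) : ℝ) / Nat.card (wSphere (gens L) n)
      ≤ ((2 * n + 2) ^ 2 * c ^ (2 * n / 3 + 1) : ℝ) / c ^ (n + 1) := by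
        gcongr
        · exact_mod_cast hD
        · exact_mod_cast hS
    _ = (2 * n + 2) ^ 2 * (1 / c ^ (n - 2 * n / 3)) := by
        rw [hsplit]; field_simp
    _ ≤ (2 * n + 2) ^ 2 * (4 / 5) ^ n := by
        gcongr; exact one_div_pow_le_four_fifths_pow hcR (by omega)

end

end WreathZ

/-- In `ℤ ≀ L` with the switch-walk-switch generating set, there is `α < 1`
with `|S(n) \ S(n)^∞| / |S(n)| ≤ αⁿ` for all `n`. -/
theorem stmt_8 {L : Type*} [Group L] [Finite L] :
    ∃ α : ℝ, α < 1 ∧ ∀ n : ℕ,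
      (Nat.card ↥(wSphere (swsw MZ L genZ) n \ sphereInf (swsw MZ L genZ) n 0) : ℝ)
          / (Nat.card ↥(wSphere (swsw MZ L genZ) n) : ℝ) ≤ α ^ n := by
  rcases subsingleton_or_nontrivial L with hL | hL
  · refine ⟨0, zero_lt_one, fun n => ?_⟩
    have h : Nat.card (WreathZ.sphereFinPart L n) = 0 := by
      simp [WreathZ.sphereFinPart_eq_empty]
    change (Nat.card (WreathZ.sphereFinPart L n) : ℝ) / _ ≤ _
    rw [h, Nat.cast_zero, zero_div]
    positivity
  · refine exists_lt_one_forall_le_pow (β := 9 / 10) WreathZ.card_sphereFinPart_div_lt_one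
      (by norm_num) (by norm_num) ?_
    filter_upwards [eventually_sq_mul_pow_le, eventually_ne_atTop 0] with n h₁ h₂
    exact (WreathZ.card_sphereFinPart_div_le h₂).trans h₁
end
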